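/- arXiv:2601.19701 — 4 statements merged into one kernel-verified Lean document; each statement's English description precedes it below -/
import Mathlib

section
/- Let d ∈ {2,3}. Let (h_n) ⊂ (0,1) with h_n → 0⁺, write ℓ_n := ℓ(h_n), and let (β_n) = ((β_{n,+}, β_{n,−}))_n be a bounded sequence in ℂ². Then there exists C > 1 such that for every integer Υ ≥ 1 and every n with h_n^{−1} ≥ Υ, the tail sum Σ over integers k with k ≥ −ℓ_n and |k| ≥ Υ+1 of |β_{n,+} + (−1)^{ℓ_n+k} β_{n,−}|² · m_{ℓ_n+k}/(λ_{ℓ_n+k}² − h_n^{−2})² is at most C h_n^{3−d}/Υ. -/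
open Filter

/-- The squared Laplace eigenvalue `λ_ℓ² = ℓ(ℓ+d−1)` on `S^d`, extended to integer index. -/
noncomputable def lam2 (d : ℕ) (l : ℤ) : ℝ := (l : ℝ) * ((l : ℝ) + (d : ℝ) - 1)

/-- The multiplicity `m_ℓ` (`2ℓ+1` if `d = 2`, `(ℓ+1)²` if `d = 3`), extended to integer
index. -/
noncomputable def mult (d : ℕ) (l : ℤ) : ℝ :=
  if d = 2 then 2 * (l : ℝ) + 1 else ((l : ℝ) + 1) ^ 2

/-!
Write `a = ℓ + σ`, so that `h⁻² = a (a + d - 1)`. Then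
`λ_{ℓ+k}² - h⁻² = (k - σ) D` with `D = ℓ + k + a + d - 1 ≥ a + d - 1 ≥ h⁻¹`, and
`m_{ℓ+k} ≤ 2 h^{3-d} D²`, so the `k`-th term is at most `32 M² h^{3-d} / k²` once `|k| ≥ 2`,
where `M` bounds `‖β‖`. Summing `1/k²` over `|k| > Υ` gives at most `2/Υ`.
-/

lemma lam2_sub_eq_mul (d : ℕ) (l : ℤ) (a : ℝ) :
    lam2 d l - a * (a + d - 1) = (l - a) * (l + a + d - 1) := by
  unfold lam2
  ring

lemma mult_nonneg (d : ℕ) {l : ℤ} (hl : 0 ≤ l) : 0 ≤ mult d l := by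
  have : (0 : ℝ) ≤ l := by exact_mod_cast hl
  unfold mult
  split_ifs <;> positivity

lemma mult_le_two_mul_zpow_mul_sq {d : ℕ} (hd : d = 2 ∨ d = 3) {H D : ℝ} {l : ℤ}
    (hl : 0 ≤ l) (hlD : (l : ℝ) + 1 ≤ D) (hHD : 1 ≤ H * D) :
    mult d l ≤ 2 * H ^ ((3 : ℤ) - d) * D ^ 2 := by
  have hl' : (0 : ℝ) ≤ l := by exact_mod_cast hl
  rcases hd with rfl | rfl
  · have : D ≤ H * D * D := le_mul_of_one_le_left (by linarith) hHD
    simp only [mult, if_true]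
    norm_num
    nlinarith
  · simp only [mult]
    norm_num
    nlinarith

lemma mult_div_sq_lam2_sub_le {d : ℕ} (hd : d = 2 ∨ d = 3) {H σ : ℝ} (hH : 0 < H)
    (hσ : σ ∈ Set.Ico (0 : ℝ) 1) {L : ℕ}
    (heq : H ^ (-2 : ℤ) = ((L : ℝ) + σ) * ((L : ℝ) + σ + d - 1)) {k : ℤ}
    (hl : 0 ≤ (L : ℤ) + k) (hk : 2 ≤ |k|) :
    mult d (L + k) / (lam2 d (L + k) - H ^ (-2 : ℤ)) ^ 2 ≤ 8 * H ^ ((3 : ℤ) - d) / (k : ℝ) ^ 2 := by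
  obtain ⟨hσ0, hσ1⟩ := hσ
  set a : ℝ := L + σ with ha_def
  set D : ℝ := ((L + k : ℤ) : ℝ) + a + d - 1 with hD_def
  have hd2 : (2 : ℝ) ≤ d := by rcases hd with rfl | rfl <;> norm_num
  have ha : 0 ≤ a := by positivity
  have hl' : (0 : ℝ) ≤ ((L + k : ℤ) : ℝ) := by exact_mod_cast hl
  have hD : a + d - 1 ≤ D := by linarith
  have hD0 : 0 < D := by linarith
  have hden : lam2 d (L + k) - H ^ (-2 : ℤ) = (k - σ) * D := by
    rw [heq, lam2_sub_eq_mul, hD_def, ha_def]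
    push_cast
    ring
  have hHD : 1 ≤ H * D := by
    have hH2 : H ^ 2 * (a * (a + d - 1)) = 1 := by
      rw [← heq, zpow_neg, zpow_ofNat]
      field_simp
    have haD : a * (a + d - 1) ≤ D ^ 2 := by nlinarith
    nlinarith [mul_le_mul_of_nonneg_left haD (sq_nonneg H), mul_pos hH hD0]
  have hk0 : (0 : ℝ) < (k : ℝ) ^ 2 := by
    have : (k : ℝ) ≠ 0 := by exact_mod_cast (by rintro rfl; simp at hk)
    positivity
  have hkσ : (k : ℝ) ^ 2 ≤ 4 * (k - σ) ^ 2 := by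
    have hk' : (2 : ℝ) ≤ |(k : ℝ)| := by exact_mod_cast hk
    have habs : |(k : ℝ)| ≤ 2 * |(k : ℝ) - σ| := by
      have := abs_sub_abs_le_abs_sub (k : ℝ) σ
      rw [abs_of_nonneg hσ0] at this
      linarith
    calc (k : ℝ) ^ 2 = |(k : ℝ)| ^ 2 := (sq_abs _).symm
      _ ≤ (2 * |(k : ℝ) - σ|) ^ 2 := pow_le_pow_left₀ (abs_nonneg _) habs 2
      _ = 4 * (k - σ) ^ 2 := by rw [mul_pow, sq_abs]; norm_num
  have hmult := mult_le_two_mul_zpow_mul_sq hd hl (by linarith) hHD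
  have hHp : 0 < H ^ ((3 : ℤ) - d) := zpow_pos hH _
  calc mult d (L + k) / (lam2 d (L + k) - H ^ (-2 : ℤ)) ^ 2
      = mult d (L + k) / ((k - σ) ^ 2 * D ^ 2) := by rw [hden, mul_pow]
    _ ≤ 2 * H ^ ((3 : ℤ) - d) * D ^ 2 / ((k - σ) ^ 2 * D ^ 2) := by gcongr
    _ = 2 * H ^ ((3 : ℤ) - d) / (k - σ) ^ 2 := by field_simp
    _ ≤ 8 * H ^ ((3 : ℤ) - d) / (k : ℝ) ^ 2 := by
      rw [div_le_div_iff₀ (by linarith) hk0]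
      nlinarith

lemma norm_add_neg_one_zpow_mul_le {𝕜 : Type*} [NormedField 𝕜] (x y : 𝕜) (m : ℤ) :
    ‖x + (-1) ^ m * y‖ ≤ ‖x‖ + ‖y‖ := by
  calc ‖x + (-1) ^ m * y‖ ≤ ‖x‖ + ‖(-1) ^ m * y‖ := norm_add_le _ _
    _ = ‖x‖ + ‖y‖ := by rw [norm_mul, norm_zpow, norm_neg, norm_one, one_zpow, one_mul]

lemma Summable.comp_natAbs {g : ℕ → ℝ} (hg : Summable g) : Summable fun k : ℤ ↦ g k.natAbs :=
  .of_nat_of_neg_add_one hg ((summable_nat_add_iff 1).2 hg)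

lemma tsum_comp_natAbs_le {g : ℕ → ℝ} (hg : Summable g) (hg0 : ∀ j, 0 ≤ g j) :
    ∑' k : ℤ, g k.natAbs ≤ 2 * ∑' j, g j := by
  rw [tsum_of_nat_of_neg_add_one (f := fun k : ℤ ↦ g k.natAbs) hg ((summable_nat_add_iff 1).2 hg)]
  change ∑' n, g n + ∑' n, g (n + 1) ≤ _
  linarith [hg.tsum_eq_zero_add, hg0 0]

noncomputable def tailWeight (Υ j : ℕ) : ℝ := if Υ < j then ((j : ℝ) ^ 2)⁻¹ else 0

lemma tailWeight_nonneg (Υ j : ℕ) : 0 ≤ tailWeight Υ j := by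
  unfold tailWeight
  split_ifs <;> positivity

lemma sum_range_tailWeight_le {Υ : ℕ} (hΥ : Υ ≠ 0) (N : ℕ) :
    ∑ j ∈ Finset.range N, tailWeight Υ j ≤ (Υ : ℝ)⁻¹ :=
  calc ∑ j ∈ Finset.range N, tailWeight Υ j
      = ∑ j ∈ Finset.range N with Υ < j, ((j : ℝ) ^ 2)⁻¹ := (Finset.sum_filter _ _).symm
    _ ≤ ∑ j ∈ Finset.Ioc Υ (max Υ N), ((j : ℝ) ^ 2)⁻¹ :=
        Finset.sum_le_sum_of_subset_of_nonneg
          (fun j hj ↦ by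
            simp only [Finset.mem_filter, Finset.mem_range, Finset.mem_Ioc] at hj ⊢
            omega)
          (fun _ _ _ ↦ by positivity)
    _ ≤ (Υ : ℝ)⁻¹ - ((max Υ N : ℕ) : ℝ)⁻¹ := sum_Ioc_inv_sq_le_sub hΥ (le_max_left _ _)
    _ ≤ (Υ : ℝ)⁻¹ := sub_le_self _ (by positivity)

lemma summable_tailWeight {Υ : ℕ} (hΥ : Υ ≠ 0) : Summable (tailWeight Υ) :=
  summable_of_sum_range_le (tailWeight_nonneg Υ) (sum_range_tailWeight_le hΥ)

lemma tsum_tailWeight_le {Υ : ℕ} (hΥ : Υ ≠ 0) : ∑' j, tailWeight Υ j ≤ (Υ : ℝ)⁻¹ :=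
  Real.tsum_le_of_sum_range_le (tailWeight_nonneg Υ) (sum_range_tailWeight_le hΥ)

/-- The `(ℓ + k)`-th term of Parseval's sum for `‖G_h^{Q,β}‖²`, with `H = h` and `L = ℓ(h)`. -/
noncomputable def parsevalSummand (d : ℕ) (H : ℝ) (L : ℕ) (β : ℂ × ℂ) (k : ℤ) : ℝ :=
  ‖β.1 + (-1 : ℂ) ^ ((L : ℤ) + k) * β.2‖ ^ 2 * mult d ((L : ℤ) + k) /
    (lam2 d ((L : ℤ) + k) - H ^ (-2 : ℤ)) ^ 2

def tailIndex (L Υ : ℕ) : Set ℤ := {k | -(L : ℤ) ≤ k ∧ (Υ : ℤ) + 1 ≤ |k|}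

section Tail

variable {d : ℕ} {H σ M : ℝ} {L Υ : ℕ} {β : ℂ × ℂ}

lemma parsevalSummand_nonneg {k : ℤ} (hl : 0 ≤ (L : ℤ) + k) : 0 ≤ parsevalSummand d H L β k :=
  div_nonneg (mul_nonneg (by positivity) (mult_nonneg d hl)) (sq_nonneg _)

lemma sq_norm_add_neg_one_zpow_mul_le (hβ : ‖β‖ ≤ M) (m : ℤ) :
    ‖β.1 + (-1 : ℂ) ^ m * β.2‖ ^ 2 ≤ 4 * M ^ 2 := by
  have hnorm : ‖β.1 + (-1 : ℂ) ^ m * β.2‖ ≤ 2 * M :=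
    (norm_add_neg_one_zpow_mul_le β.1 β.2 m).trans
      (by linarith [norm_fst_le β, norm_snd_le β])
  calc ‖β.1 + (-1 : ℂ) ^ m * β.2‖ ^ 2 ≤ (2 * M) ^ 2 := pow_le_pow_left₀ (norm_nonneg _) hnorm 2
    _ = 4 * M ^ 2 := by ring

variable (hd : d = 2 ∨ d = 3) (hH : 0 < H) (hσ : σ ∈ Set.Ico (0 : ℝ) 1)
  (heq : H ^ (-2 : ℤ) = ((L : ℝ) + σ) * ((L : ℝ) + σ + d - 1)) (hβ : ‖β‖ ≤ M) (hΥ : Υ ≠ 0)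
include hd hH hσ heq hβ hΥ

lemma parsevalSummand_le_tailWeight {k : ℤ} (hk : k ∈ tailIndex L Υ) :
    parsevalSummand d H L β k ≤ 32 * M ^ 2 * H ^ ((3 : ℤ) - d) * tailWeight Υ k.natAbs := by
  obtain ⟨hkL, hkΥ⟩ := hk
  have hl : 0 ≤ (L : ℤ) + k := neg_le_iff_add_nonneg'.1 hkL
  have hweight : tailWeight Υ k.natAbs = ((k : ℝ) ^ 2)⁻¹ := by
    rw [Int.abs_eq_natAbs] at hkΥ
    rw [tailWeight, if_pos (by omega), Nat.cast_natAbs, Int.cast_abs, sq_abs]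
  calc parsevalSummand d H L β k
      = ‖β.1 + (-1 : ℂ) ^ ((L : ℤ) + k) * β.2‖ ^ 2 *
          (mult d ((L : ℤ) + k) / (lam2 d ((L : ℤ) + k) - H ^ (-2 : ℤ)) ^ 2) :=
        mul_div_assoc _ _ _
    _ ≤ 4 * M ^ 2 * (8 * H ^ ((3 : ℤ) - d) / (k : ℝ) ^ 2) :=
        mul_le_mul (sq_norm_add_neg_one_zpow_mul_le hβ _)
          (mult_div_sq_lam2_sub_le hd hH hσ heq hl (by omega))
          (div_nonneg (mult_nonneg d hl) (sq_nonneg _)) (by positivity)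
    _ = 32 * M ^ 2 * H ^ ((3 : ℤ) - d) * tailWeight Υ k.natAbs := by
        rw [hweight]
        ring

lemma summable_parsevalSummand_tail_and_tsum_le :
    Summable (fun k : tailIndex L Υ ↦ parsevalSummand d H L β k) ∧
      ∑' k : tailIndex L Υ, parsevalSummand d H L β k ≤ 64 * M ^ 2 * H ^ ((3 : ℤ) - d) / Υ := by
  set c := 32 * M ^ 2 * H ^ ((3 : ℤ) - d)
  have hw := (summable_tailWeight hΥ).comp_natAbs
  have hle (k : tailIndex L Υ) : parsevalSummand d H L β k ≤ c * tailWeight Υ (k : ℤ).natAbs :=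
    parsevalSummand_le_tailWeight hd hH hσ heq hβ hΥ k.2
  have hsum : Summable fun k : tailIndex L Υ ↦ parsevalSummand d H L β k :=
    .of_nonneg_of_le (fun k ↦ parsevalSummand_nonneg (neg_le_iff_add_nonneg'.1 k.2.1)) hle
      ((hw.subtype _).mul_left c)
  refine ⟨hsum, ?_⟩
  calc ∑' k : tailIndex L Υ, parsevalSummand d H L β k
      ≤ ∑' k : tailIndex L Υ, c * tailWeight Υ (k : ℤ).natAbs :=
        hsum.tsum_le_tsum hle ((hw.subtype _).mul_left c)
    _ = c * ∑' k : tailIndex L Υ, tailWeight Υ (k : ℤ).natAbs := tsum_mul_left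
    _ ≤ c * ∑' k : ℤ, tailWeight Υ k.natAbs := by
        gcongr
        exact hw.tsum_subtype_le _ _ fun _ ↦ tailWeight_nonneg _ _
    _ ≤ c * (2 * (Υ : ℝ)⁻¹) := by
        gcongr
        exact (tsum_comp_natAbs_le (summable_tailWeight hΥ) (tailWeight_nonneg Υ)).trans
          (by gcongr; exact tsum_tailWeight_le hΥ)
    _ = 64 * M ^ 2 * H ^ ((3 : ℤ) - d) / Υ := by
        ring

end Tail

theorem stmt_2_general (d : ℕ) (hd : d = 2 ∨ d = 3)
    (h : ℕ → ℝ) (hh : ∀ n, h n ∈ Set.Ioo (0 : ℝ) 1)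
    (L : ℕ → ℕ) (s : ℕ → ℝ) (hs : ∀ n, s n ∈ Set.Ico (0 : ℝ) 1)
    (heq : ∀ n, (h n) ^ (-2 : ℤ) = ((L n : ℝ) + s n) * ((L n : ℝ) + s n + (d : ℝ) - 1))
    (β : ℕ → ℂ × ℂ) (hβ : ∃ M : ℝ, ∀ n, ‖β n‖ ≤ M) :
    ∃ C : ℝ, 1 < C ∧ ∀ Υ : ℕ, 1 ≤ Υ → ∀ n : ℕ, (Υ : ℝ) ≤ (h n)⁻¹ →
      Summable (fun k : {k : ℤ // -(L n : ℤ) ≤ k ∧ (Υ : ℤ) + 1 ≤ |k|} =>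
        ‖(β n).1 + (-1 : ℂ) ^ ((L n : ℤ) + (k : ℤ)) * (β n).2‖ ^ 2 *
          mult d ((L n : ℤ) + (k : ℤ)) /
            (lam2 d ((L n : ℤ) + (k : ℤ)) - (h n) ^ (-2 : ℤ)) ^ 2) ∧
      (∑' k : {k : ℤ // -(L n : ℤ) ≤ k ∧ (Υ : ℤ) + 1 ≤ |k|},
        ‖(β n).1 + (-1 : ℂ) ^ ((L n : ℤ) + (k : ℤ)) * (β n).2‖ ^ 2 *
          mult d ((L n : ℤ) + (k : ℤ)) /
            (lam2 d ((L n : ℤ) + (k : ℤ)) - (h n) ^ (-2 : ℤ)) ^ 2)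
        ≤ C * (h n) ^ ((3 : ℤ) - (d : ℤ)) / (Υ : ℝ) := by
  obtain ⟨M, hM⟩ := hβ
  refine ⟨64 * M ^ 2 + 2, by linarith [sq_nonneg M], fun Υ hΥ n _ ↦ ?_⟩
  have hH := (hh n).1
  obtain ⟨hsum, hle⟩ :=
    summable_parsevalSummand_tail_and_tsum_le hd hH (hs n) (heq n) (hM n) (by omega : Υ ≠ 0)
  refine ⟨hsum, hle.trans ?_⟩
  have hHp := zpow_pos hH ((3 : ℤ) - d)
  gcongr
  linarith

/-- Tail estimate: for a bounded sequence `β_n ∈ ℂ²` and `h_n → 0⁺`,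
there is `C > 1` such that for all `Υ ≥ 1` and all `n` with `h_n⁻¹ ≥ Υ`, the sum over
integers `k ≥ −ℓ_n` with `|k| ≥ Υ+1` of
`|β_{n,+} + (−1)^{ℓ_n+k} β_{n,−}|² · m_{ℓ_n+k}/(λ_{ℓ_n+k}² − h_n⁻²)²`
is at most `C h_n^{3−d}/Υ`. -/
theorem stmt_2 (d : ℕ) (hd : d = 2 ∨ d = 3)
    (h : ℕ → ℝ) (hh : ∀ n, h n ∈ Set.Ioo (0 : ℝ) 1)
    (hto : Tendsto h atTop (nhds 0))
    (L : ℕ → ℕ) (s : ℕ → ℝ) (hs : ∀ n, s n ∈ Set.Ico (0 : ℝ) 1)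
    (heq : ∀ n, (h n) ^ (-2 : ℤ) = ((L n : ℝ) + s n) * ((L n : ℝ) + s n + (d : ℝ) - 1))
    (β : ℕ → ℂ × ℂ) (hβ : ∃ M : ℝ, ∀ n, ‖β n‖ ≤ M) :
    ∃ C : ℝ, 1 < C ∧ ∀ Υ : ℕ, 1 ≤ Υ → ∀ n : ℕ, (Υ : ℝ) ≤ (h n)⁻¹ →
      Summable (fun k : {k : ℤ // -(L n : ℤ) ≤ k ∧ (Υ : ℤ) + 1 ≤ |k|} =>
        ‖(β n).1 + (-1 : ℂ) ^ ((L n : ℤ) + (k : ℤ)) * (β n).2‖ ^ 2 *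
          mult d ((L n : ℤ) + (k : ℤ)) /
            (lam2 d ((L n : ℤ) + (k : ℤ)) - (h n) ^ (-2 : ℤ)) ^ 2) ∧
      (∑' k : {k : ℤ // -(L n : ℤ) ≤ k ∧ (Υ : ℤ) + 1 ≤ |k|},
        ‖(β n).1 + (-1 : ℂ) ^ ((L n : ℤ) + (k : ℤ)) * (β n).2‖ ^ 2 *
          mult d ((L n : ℤ) + (k : ℤ)) /
            (lam2 d ((L n : ℤ) + (k : ℤ)) - (h n) ^ (-2 : ℤ)) ^ 2)
        ≤ C * (h n) ^ ((3 : ℤ) - (d : ℤ)) / (Υ : ℝ) :=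
  stmt_2_general d hd h hh L s hs heq β hβ
end

section
/- Let d ∈ {2,3} and let (h_n) ⊂ (0,1) with h_n → 0⁺ and h_n^{−2} ∉ {λ_ℓ² : ℓ ∈ ℕ} for all n, so that σ_n := σ(h_n) ∈ (0,1); write ℓ_n := ℓ(h_n). (i) There exists C > 1 such that for every integer Υ ≥ 1 there exists ν ∈ ℕ such that for all n ≥ ν and all integers k with |k| ≤ Υ: |m_{ℓ_n+k}/(λ_{ℓ_n+k}² − h_n^{−2})² − h_n^{3−d}/(2(d−1)(k−σ_n)²)| ≤ C h_n^{3−d} · Υ h_n/(k−σ_n)². (ii) If moreover σ_n → σ ∈ [0,1], then there exists C > 1 such that for every integer Υ ≥ 1 there exists ν ∈ ℕ such that for all n ≥ ν and all integers k with |k| ≤ Υ and k ≠ σ: |m_{ℓ_n+k}/(λ_{ℓ_n+k}² − h_n^{−2})² − h_n^{3−d}/(2(d−1)(k−σ)²)| ≤ C h_n^{3−d}(Υ h_n + |σ_n − σ|)/(k−σ)². -/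
/-!
Put `x = k - s` and `N = 2(L + s) + d - 1 + x`. Then `λ²_{L+k} - h⁻² = x N`, while
`(2(L + s) + d - 1)² = 4h⁻² + (d - 1)²` puts `N` within `Υ + 2` of `2/h`. For `d = 2` the
multiplicity is `N + x`, for `d = 3` it is `(N + x)²/4`, so `m/(xN)²` is `h^{3-d}/(2(d-1)x²)`
up to a relative error `O(Υ h)`. Part (ii) moves the centre from `s` to `σ`: since `k - σ` stays
a fixed distance `δ` away from `0` for `k ≠ σ`, this costs `O(|s - σ|/δ)` relative error.
-/

open Filter

lemma abs_sub_two_mul_le_one_of_sq_eq {a c e : ℝ} (ha : 0 ≤ a) (hc : c ^ 2 ≤ 4) (he : 1 ≤ e)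
    (h : a ^ 2 = 4 * e ^ 2 + c ^ 2) : |a - 2 * e| ≤ 1 := by
  rw [abs_le]; constructor <;> nlinarith

lemma abs_add_div_sq_sub_inv_le {N e u x : ℝ} (hu : 1 ≤ u) (he : 2 * (u + 2) ≤ e)
    (hN : |N - 2 * e| ≤ u + 2) (hx : |x| ≤ u + 1) :
    |(N + x) / N ^ 2 - 1 / (2 * e)| ≤ 4 * u / e ^ 2 := by
  have hNe : e ≤ N := by linarith [(abs_le.mp hN).1]
  have he0 : 0 < e := by linarith
  have hN0 : 0 < N := by linarith
  have hsplit : (N + x) / N ^ 2 - 1 / (2 * e) = (2 * e - N) / (2 * e * N) + x / N ^ 2 := by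
    field_simp; ring
  calc |(N + x) / N ^ 2 - 1 / (2 * e)|
      ≤ |2 * e - N| / (2 * e * N) + |x| / N ^ 2 := by
        rw [hsplit]
        refine (abs_add_le _ _).trans_eq ?_
        rw [abs_div, abs_div, abs_of_pos (by positivity : 0 < 2 * e * N),
          abs_of_pos (by positivity : 0 < N ^ 2)]
    _ ≤ (u + 2) / (2 * e * e) + (u + 1) / e ^ 2 := by
        rw [abs_sub_comm]; gcongr
    _ ≤ 4 * u / e ^ 2 := by
        rw [div_add_div _ _ (by positivity) (by positivity), div_le_div_iff₀ (by positivity)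
          (by positivity)]
        nlinarith [pow_pos he0 4]

lemma abs_add_sq_div_sq_sub_quarter_le {N e u x : ℝ} (hu : 1 ≤ u) (he : u + 1 ≤ e)
    (hN : e ≤ N) (hx : |x| ≤ u + 1) :
    |(N + x) ^ 2 / (4 * N ^ 2) - 1 / 4| ≤ 4 * u / e := by
  have hN0 : 0 < N := by linarith
  have hsplit : (N + x) ^ 2 / (4 * N ^ 2) - 1 / 4 = x * (2 * N + x) / (4 * N ^ 2) := by
    field_simp; ring
  have hxN : |2 * N + x| ≤ 3 * N := by rw [abs_le]; constructor <;> linarith [abs_le.mp hx]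
  calc |(N + x) ^ 2 / (4 * N ^ 2) - 1 / 4|
      ≤ (u + 1) * (3 * N) / (4 * N ^ 2) := by
        rw [hsplit, abs_div, abs_mul, abs_of_pos (by positivity : 0 < 4 * N ^ 2)]
        gcongr
    _ = 3 * (u + 1) / (4 * N) := by field_simp
    _ ≤ 3 * (u + 1) / (4 * e) := by gcongr; linarith
    _ ≤ 4 * u / e := by
        rw [div_le_div_iff₀ (by linarith) (by linarith)]; nlinarith

lemma lam2_sub_mul (d : ℕ) (l : ℤ) (t : ℝ) :
    lam2 d l - t * (t + d - 1) = ((l : ℝ) - t) * ((l : ℝ) + t + d - 1) := by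
  rw [lam2]; ring

lemma abs_mult_div_sq_sub_le {d : ℕ} (hd : d = 2 ∨ d = 3) {h t u : ℝ} {l : ℤ} (ht : 0 ≤ t)
    (heq : h ^ (-2 : ℤ) = t * (t + d - 1)) (hu : 1 ≤ u)
    (hlarge : 2 * (u + 2) ≤ h⁻¹) (hl : |(l : ℝ) - t| ≤ u + 1) :
    |mult d l / (lam2 d l - h ^ (-2 : ℤ)) ^ 2
        - h ^ ((3 : ℤ) - d) / (2 * ((d : ℝ) - 1) * ((l : ℝ) - t) ^ 2)|
      ≤ 4 * h ^ ((3 : ℤ) - d) * (u * h) / ((l : ℝ) - t) ^ 2 := by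
  set x := (l : ℝ) - t
  set N := (l : ℝ) + t + d - 1
  set e := h⁻¹
  have hd1 : (1 : ℝ) ≤ d - 1 ∧ ((d : ℝ) - 1) ^ 2 ≤ 4 := by rcases hd with rfl | rfl <;> norm_num
  have he2 : h ^ (-2 : ℤ) = e ^ 2 := by rw [zpow_neg, inv_pow]; rfl
  have hcentre : |(2 * t + (d - 1)) - 2 * e| ≤ 1 :=
    abs_sub_two_mul_le_one_of_sq_eq (by linarith) hd1.2 (by linarith)
      (by rw [← he2, heq]; ring)
  have hN : |N - 2 * e| ≤ u + 2 := by
    have : N - 2 * e = x + ((2 * t + (d - 1)) - 2 * e) := by ring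
    rw [this]; exact (abs_add_le _ _).trans (by linarith)
  have hNe : e ≤ N := by linarith [(abs_le.mp hN).1]
  have hN0 : N ≠ 0 := (by linarith : 0 < N).ne'
  rw [heq, lam2_sub_mul]
  rcases eq_or_ne x 0 with hx0 | hx0
  · -- `l = t`: both sides are `0`, as division by `0` gives `0`
    simp [x, hx0]
  have hsplit : mult d l / (x * N) ^ 2 - h ^ ((3 : ℤ) - d) / (2 * ((d : ℝ) - 1) * x ^ 2)
      = (mult d l / N ^ 2 - h ^ ((3 : ℤ) - d) / (2 * (d - 1))) / x ^ 2 := by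
    have : (d : ℝ) - 1 ≠ 0 := by linarith
    field_simp
  rw [hsplit, abs_div, abs_of_nonneg (sq_nonneg x)]
  gcongr
  rcases hd with rfl | rfl
  · have hmult : mult 2 l = N + x := by simp only [mult, N, x]; push_cast; ring
    calc |mult 2 l / N ^ 2 - h ^ ((3 : ℤ) - (2 : ℕ)) / (2 * (((2 : ℕ) : ℝ) - 1))|
        = |(N + x) / N ^ 2 - 1 / (2 * e)| := by rw [hmult]; norm_num [e]; ring_nf
      _ ≤ 4 * u / e ^ 2 := abs_add_div_sq_sub_inv_le hu hlarge hN hl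
      _ = 4 * h ^ ((3 : ℤ) - (2 : ℕ)) * (u * h) := by norm_num [e]; ring
  · have hmult : mult 3 l = (N + x) ^ 2 / 4 := by
      simp only [mult, if_neg (by norm_num : (3 : ℕ) ≠ 2), N, x]; push_cast; ring
    calc |mult 3 l / N ^ 2 - h ^ ((3 : ℤ) - (3 : ℕ)) / (2 * (((3 : ℕ) : ℝ) - 1))|
        = |(N + x) ^ 2 / (4 * N ^ 2) - 1 / 4| := by rw [hmult]; norm_num [div_div]
      _ ≤ 4 * u / e := abs_add_sq_div_sq_sub_quarter_le hu (by linarith) hNe hl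
      _ = 4 * h ^ ((3 : ℤ) - (3 : ℕ)) * (u * h) := by norm_num [e]; ring

lemma abs_div_sq_sub_div_sq_le {K x y δ : ℝ} (hK : 0 ≤ K) (hδ : 0 < δ) (hy : δ ≤ |y|)
    (hxy : |x - y| ≤ δ / 2) : |K / x ^ 2 - K / y ^ 2| ≤ 6 * K * |x - y| / (δ * y ^ 2) := by
  have hx : δ / 2 ≤ |x| := by linarith [abs_sub_abs_le_abs_sub y x, abs_sub_comm x y]
  have hxy' : |x + y| ≤ 3 * |x| := by
    linarith [abs_add_le x y, abs_sub_abs_le_abs_sub y x, abs_sub_comm x y]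
  have hx0 : 0 < |x| := by linarith
  have hy0 : 0 < |y| := by linarith
  have hy2 : 0 < y ^ 2 := by rw [← sq_abs]; exact pow_pos hy0 2
  have hsplit : K / x ^ 2 - K / y ^ 2 = K * ((y - x) * (x + y)) / (x ^ 2 * y ^ 2) := by
    have : x ≠ 0 := abs_pos.mp hx0
    have : y ≠ 0 := abs_pos.mp hy0
    field_simp; ring
  calc |K / x ^ 2 - K / y ^ 2|
      = K * (|x - y| * |x + y|) / (|x| ^ 2 * y ^ 2) := by
        rw [hsplit, abs_div, abs_mul, abs_mul, abs_of_nonneg hK, abs_sub_comm, abs_mul, abs_pow,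
          abs_of_nonneg (sq_nonneg y)]
    _ ≤ K * (|x - y| * (3 * |x|)) / (|x| ^ 2 * y ^ 2) := by gcongr
    _ = 3 * K * |x - y| / (|x| * y ^ 2) := by field_simp
    _ ≤ 3 * K * |x - y| / (δ / 2 * y ^ 2) := by gcongr
    _ = 6 * K * |x - y| / (δ * y ^ 2) := by field_simp; ring

lemma abs_sub_div_sq_le_of_abs_sub_le {E T c x y δ B : ℝ} (hc : 1 ≤ c) (hT : 0 ≤ T)
    (hδ : 0 < δ) (hy : δ ≤ |y|) (hxy : |x - y| ≤ δ / 2)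
    (hE : |E - T / (2 * c * x ^ 2)| ≤ B / x ^ 2) :
    |E - T / (2 * c * y ^ 2)| ≤ (4 * B + 3 / δ * T * |x - y|) / y ^ 2 := by
  have hx : δ / 2 ≤ |x| := by linarith [abs_sub_abs_le_abs_sub y x, abs_sub_comm x y]
  have hx2 : 0 < x ^ 2 := by rw [← sq_abs]; exact pow_pos (by linarith) 2
  have hy2 : 0 < y ^ 2 := by rw [← sq_abs]; exact pow_pos (by linarith) 2
  have hyx : y ^ 2 ≤ 4 * x ^ 2 := by
    rw [← sq_abs y, ← sq_abs x]; nlinarith [abs_sub_abs_le_abs_sub y x, abs_sub_comm x y]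
  have hB : 0 ≤ B := by
    have := (abs_nonneg _).trans hE
    rwa [le_div_iff₀ hx2, zero_mul] at this
  have hK : 0 ≤ T / (2 * c) := by positivity
  have hKT : T / (2 * c) ≤ T / 2 := by gcongr; linarith
  rw [← div_div] at hE ⊢
  calc |E - T / (2 * c) / y ^ 2|
      ≤ |E - T / (2 * c) / x ^ 2| + |T / (2 * c) / x ^ 2 - T / (2 * c) / y ^ 2| :=
        abs_sub_le _ _ _
    _ ≤ B / x ^ 2 + 6 * (T / (2 * c)) * |x - y| / (δ * y ^ 2) :=
        add_le_add hE (abs_div_sq_sub_div_sq_le hK hδ hy hxy)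
    _ ≤ 4 * B / y ^ 2 + 3 / δ * T * |x - y| / y ^ 2 := by
        refine add_le_add ?_ ?_
        · rw [div_le_div_iff₀ hx2 hy2]; nlinarith
        · calc 6 * (T / (2 * c)) * |x - y| / (δ * y ^ 2)
              ≤ 6 * (T / 2) * |x - y| / (δ * y ^ 2) := by gcongr
            _ = 3 / δ * T * |x - y| / y ^ 2 := by field_simp; ring
    _ = (4 * B + 3 / δ * T * |x - y|) / y ^ 2 := by ring

lemma eventually_abs_mult_div_sq_sub_le {d : ℕ} (hd : d = 2 ∨ d = 3) {h : ℕ → ℝ}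
    (hinv : Tendsto (fun n => (h n)⁻¹) atTop atTop) {L : ℕ → ℕ} {s : ℕ → ℝ}
    (hs : ∀ n, s n ∈ Set.Ico (0 : ℝ) 1)
    (heq : ∀ n, (h n) ^ (-2 : ℤ) = ((L n : ℝ) + s n) * ((L n : ℝ) + s n + (d : ℝ) - 1))
    {Υ : ℕ} (hΥ : 1 ≤ Υ) :
    ∀ᶠ n in atTop, ∀ k : ℤ, |k| ≤ (Υ : ℤ) →
      |mult d ((L n : ℤ) + k) / (lam2 d ((L n : ℤ) + k) - (h n) ^ (-2 : ℤ)) ^ 2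
        - (h n) ^ ((3 : ℤ) - (d : ℤ)) / (2 * ((d : ℝ) - 1) * ((k : ℝ) - s n) ^ 2)|
        ≤ 4 * (h n) ^ ((3 : ℤ) - (d : ℤ)) * ((Υ : ℝ) * h n) / ((k : ℝ) - s n) ^ 2 := by
  filter_upwards [hinv.eventually_ge_atTop (2 * ((Υ : ℝ) + 2))] with n hn k hk
  have hshift : (((L n : ℤ) + k : ℤ) : ℝ) - ((L n : ℝ) + s n) = (k : ℝ) - s n := by
    push_cast; ring
  have hkΥ : |(k : ℝ)| ≤ Υ := by exact_mod_cast hk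
  have hl : |(((L n : ℤ) + k : ℤ) : ℝ) - ((L n : ℝ) + s n)| ≤ Υ + 1 := by
    rw [hshift, abs_le]
    constructor <;> linarith [abs_le.mp hkΥ, (hs n).1, (hs n).2]
  have := abs_mult_div_sq_sub_le hd (by linarith [(hs n).1, (L n).cast_nonneg (α := ℝ)])
    (heq n) (by exact_mod_cast hΥ) hn hl
  rwa [hshift] at this

lemma exists_pos_le_abs_intCast_sub (σ : ℝ) :
    ∃ δ > 0, ∀ k : ℤ, (k : ℝ) ≠ σ → δ ≤ |(k : ℝ) - σ| := by
  have hclosed : IsClosed (((↑) : ℤ → ℝ) '' {k | (k : ℝ) ≠ σ}) :=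
    Int.isClosedEmbedding_coe_real.isClosedMap _ (isClosed_discrete _)
  have hσ : σ ∉ ((↑) : ℤ → ℝ) '' {k | (k : ℝ) ≠ σ} := fun ⟨_, hk, hkσ⟩ => hk hkσ
  obtain ⟨δ, hδ, hball⟩ := Metric.isOpen_iff.mp hclosed.isOpen_compl σ hσ
  refine ⟨δ, hδ, fun k hk => ?_⟩
  by_contra! hlt
  exact hball (Metric.mem_ball.mpr (by rwa [Real.dist_eq])) ⟨k, hk, rfl⟩

theorem stmt_5_general (d : ℕ) (hd : d = 2 ∨ d = 3)
    (h : ℕ → ℝ) (hh : ∀ n, h n ∈ Set.Ioo (0 : ℝ) 1)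
    (hto : Tendsto h atTop (nhds 0))
    (L : ℕ → ℕ) (s : ℕ → ℝ) (hs : ∀ n, s n ∈ Set.Ico (0 : ℝ) 1)
    (heq : ∀ n, (h n) ^ (-2 : ℤ) =
      ((L n : ℝ) + s n) * ((L n : ℝ) + s n + (d : ℝ) - 1)) :
    (∃ C : ℝ, 1 < C ∧ ∀ Υ : ℕ, 1 ≤ Υ → ∃ ν : ℕ, ∀ n ≥ ν, ∀ k : ℤ, |k| ≤ (Υ : ℤ) →
      |mult d ((L n : ℤ) + k) / (lam2 d ((L n : ℤ) + k) - (h n) ^ (-2 : ℤ)) ^ 2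
        - (h n) ^ ((3 : ℤ) - (d : ℤ)) / (2 * ((d : ℝ) - 1) * ((k : ℝ) - s n) ^ 2)|
        ≤ C * (h n) ^ ((3 : ℤ) - (d : ℤ)) * ((Υ : ℝ) * h n) / ((k : ℝ) - s n) ^ 2) ∧
    (∀ σ : ℝ, σ ∈ Set.Icc (0 : ℝ) 1 → Tendsto s atTop (nhds σ) →
      ∃ C : ℝ, 1 < C ∧ ∀ Υ : ℕ, 1 ≤ Υ → ∃ ν : ℕ, ∀ n ≥ ν, ∀ k : ℤ,
        |k| ≤ (Υ : ℤ) → (k : ℝ) ≠ σ →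
        |mult d ((L n : ℤ) + k) / (lam2 d ((L n : ℤ) + k) - (h n) ^ (-2 : ℤ)) ^ 2
          - (h n) ^ ((3 : ℤ) - (d : ℤ)) / (2 * ((d : ℝ) - 1) * ((k : ℝ) - σ) ^ 2)|
          ≤ C * (h n) ^ ((3 : ℤ) - (d : ℤ)) * ((Υ : ℝ) * h n + |s n - σ|)
              / ((k : ℝ) - σ) ^ 2) := by
  have hinv : Tendsto (fun n => (h n)⁻¹) atTop atTop :=
    tendsto_inv_nhdsGT_zero.comp
      (tendsto_nhdsWithin_iff.mpr ⟨hto, .of_forall fun n => (hh n).1⟩)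
  refine ⟨⟨4, by norm_num, fun Υ hΥ => eventually_atTop.mp
    (eventually_abs_mult_div_sq_sub_le hd hinv hs heq hΥ)⟩, ?_⟩
  rintro σ - hσ
  obtain ⟨δ, hδ, hgap⟩ := exists_pos_le_abs_intCast_sub σ
  refine ⟨16 + 3 / δ, lt_add_of_lt_of_pos (by norm_num) (by positivity), fun Υ hΥ => ?_⟩
  have hclose : ∀ᶠ n in atTop, |s n - σ| ≤ δ / 2 := by
    filter_upwards [hσ.eventually (Metric.closedBall_mem_nhds σ (half_pos hδ))] with n hn
    rwa [Real.dist_eq] at hn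
  obtain ⟨ν, hν⟩ := eventually_atTop.mp
    ((eventually_abs_mult_div_sq_sub_le hd hinv hs heq hΥ).and hclose)
  refine ⟨ν, fun n hn k hk hkσ => ?_⟩
  obtain ⟨hbound, hsσ⟩ := hν n hn
  have hT : 0 ≤ (h n) ^ ((3 : ℤ) - (d : ℤ)) := zpow_nonneg (hh n).1.le _
  have hxy : ((k : ℝ) - s n) - ((k : ℝ) - σ) = -(s n - σ) := by ring
  have hrecentre := abs_sub_div_sq_le_of_abs_sub_le (c := (d : ℝ) - 1)
    (by rcases hd with rfl | rfl <;> norm_num) hT hδ (hgap k hkσ) (by rwa [hxy, abs_neg])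
    (hbound k hk)
  rw [hxy, abs_neg] at hrecentre
  refine hrecentre.trans ?_
  have hslack : 0 ≤ 16 * (h n) ^ ((3 : ℤ) - (d : ℤ)) * |s n - σ|
      + 3 / δ * (h n) ^ ((3 : ℤ) - (d : ℤ)) * (Υ * h n) := by
    have := (hh n).1
    positivity
  gcongr
  linarith

/-- For `h_n → 0⁺` with `h_n⁻²` never an eigenvalue:
(i) an asymptotic for `m_{ℓ_n+k}/(λ_{ℓ_n+k}² − h_n⁻²)²` in terms of `σ_n`;
(ii) if moreover `σ_n → σ ∈ [0,1]`, the analogous asymptotic with `σ` in place of `σ_n`. -/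
theorem stmt_5 (d : ℕ) (hd : d = 2 ∨ d = 3)
    (h : ℕ → ℝ) (hh : ∀ n, h n ∈ Set.Ioo (0 : ℝ) 1)
    (hto : Tendsto h atTop (nhds 0))
    (hspec : ∀ n, ∀ l : ℕ, (h n) ^ (-2 : ℤ) ≠ lam2 d (l : ℤ))
    (L : ℕ → ℕ) (s : ℕ → ℝ) (hs : ∀ n, s n ∈ Set.Ico (0 : ℝ) 1)
    (heq : ∀ n, (h n) ^ (-2 : ℤ) =
      ((L n : ℝ) + s n) * ((L n : ℝ) + s n + (d : ℝ) - 1)) :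
    (∃ C : ℝ, 1 < C ∧ ∀ Υ : ℕ, 1 ≤ Υ → ∃ ν : ℕ, ∀ n ≥ ν, ∀ k : ℤ, |k| ≤ (Υ : ℤ) →
      |mult d ((L n : ℤ) + k) / (lam2 d ((L n : ℤ) + k) - (h n) ^ (-2 : ℤ)) ^ 2
        - (h n) ^ ((3 : ℤ) - (d : ℤ)) / (2 * ((d : ℝ) - 1) * ((k : ℝ) - s n) ^ 2)|
        ≤ C * (h n) ^ ((3 : ℤ) - (d : ℤ)) * ((Υ : ℝ) * h n) / ((k : ℝ) - s n) ^ 2) ∧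
    (∀ σ : ℝ, σ ∈ Set.Icc (0 : ℝ) 1 → Tendsto s atTop (nhds σ) →
      ∃ C : ℝ, 1 < C ∧ ∀ Υ : ℕ, 1 ≤ Υ → ∃ ν : ℕ, ∀ n ≥ ν, ∀ k : ℤ,
        |k| ≤ (Υ : ℤ) → (k : ℝ) ≠ σ →
        |mult d ((L n : ℤ) + k) / (lam2 d ((L n : ℤ) + k) - (h n) ^ (-2 : ℤ)) ^ 2
          - (h n) ^ ((3 : ℤ) - (d : ℤ)) / (2 * ((d : ℝ) - 1) * ((k : ℝ) - σ) ^ 2)|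
          ≤ C * (h n) ^ ((3 : ℤ) - (d : ℤ)) * ((Υ : ℝ) * h n + |s n - σ|)
              / ((k : ℝ) - σ) ^ 2) :=
  stmt_5_general d hd h hh hto L s hs heq
end

section
/- Let d ∈ {2,3}. Let (h_n) ⊂ (0,1) with h_n → 0⁺ and h_n^{−2} ∉ {λ_ℓ² : ℓ ∈ ℕ} for all n (so σ_n := σ(h_n) ∈ (0,1)); write ℓ_n := ℓ(h_n). Assume (β_n) = ((β_{n,+}, β_{n,−})) ⊂ ℂ² converges to β = (β₊, β₋), that ρ := (−1)^{ℓ_n} is constant in n, that σ_n → σ ∈ {0,1}, that β₊ + (−1)^σ ρ β₋ = 0, and that c := lim_n (β_{n,+} + (−1)^σ ρ β_{n,−})/(σ − σ_n) exists in ℂ. Set C₀² := |c|² + Σ_{k∈ℤ, k≠σ} |β₊ + (−1)^k ρ β₋|²/(k−σ)². Then there exists C > 1 such that for every integer Υ ≥ 1 there exists ν ∈ ℕ such that for all n ≥ ν: |Σ over integers k with |k−σ| ≤ 2Υ−1 of |β_{n,+} + (−1)^{ℓ_n+k} β_{n,−}|² · m_{ℓ_n+k}/(λ_{ℓ_n+k}²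 − h_n^{−2})² − C₀² h_n^{3−d}/(2(d−1))| ≤ C h_n^{3−d}(Υ h_n + |σ_n − σ| + |β_n − β| + |c − (β_{n,+} + (−1)^σ ρ β_{n,−})/(σ − σ_n)| + Υ^{−1}). -/
/-!
Write `μ = h⁻² = (ℓ + σₙ)(ℓ + σₙ + d − 1)`. The gap to the eigenvalue of index `ℓ + k` factors as
`λ²_{ℓ+k} − μ = (k − σₙ)(2ℓ + k + σₙ + d − 1)`, and `(−1)^{ℓ+k} = (−1)^k ρ`, so the `k`-th window
term is `|β_{n,+} + (−1)^k ρ β_{n,−}|² / (k − σₙ)²` times `m_{ℓ+k} / (2ℓ + k + σₙ + d − 1)²`.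
Since `ℓ ~ h⁻¹`, the second factor is `h^{3−d} / (2(d−1)) (1 + o(1))`, while the first tends to
`|c|²` for `k = σ` and to `|β₊ + (−1)^k ρ β₋|² / (k − σ)²` otherwise. Hence, for a fixed window,
the rescaled sum converges to the window part of `C₀² / (2(d−1))`, and the rest of `C₀²` is
`O(Σ_{|j| ≥ 2Υ} j⁻²) = O(Υ⁻¹)`. As `ν` is chosen after `Υ`, the convergence on the window can
be made to cost at most `Υ⁻¹ h^{3−d}` as well.
-/

open Filter

open Topology Asymptotics

theorem isEquivalent_of_abs_sub_le {α : Type*} {l : Filter α} {u v : α → ℝ}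
    (hv : Tendsto v l atTop) (B : ℝ) (huv : ∀ᶠ x in l, |u x - v x| ≤ B) : u ~[l] v :=
  (IsBigO.of_bound B (by simpa using huv) : (u - v) =O[l] fun _ => (1 : ℝ)).trans_isLittleO
    ((isLittleO_one_left_iff ℝ).2 (tendsto_norm_atTop_atTop.comp hv))

theorem mem_Icc_of_sq_eq_mul {x t e : ℝ} (hx : 0 ≤ x) (ht : 0 ≤ t) (he : 0 ≤ e)
    (h : x ^ 2 = t * (t + e)) : x ∈ Set.Icc t (t + e) :=
  ⟨by nlinarith, by nlinarith⟩

theorem abs_sub_mul_div_le {G S S' P Q D B e E : ℝ} (hPQ : P * Q = 1) (hP : 0 ≤ P)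
    (hD : 2 ≤ D) (hB : 0 ≤ B) (hG : |G * Q - S' * D⁻¹| ≤ e) (hS : |S' - S| ≤ 2 * B * e)
    (he : e ≤ E) : |G - S * P / D| ≤ (B + 2) * P * E := by
  have hrescale : G - S * P / D = P * ((G * Q - S' * D⁻¹) + (S' - S) * D⁻¹) := by
    linear_combination (-G) * hPQ
  have hDinv : D⁻¹ ≤ 2⁻¹ := inv_anti₀ two_pos hD
  have he0 : 0 ≤ e := (abs_nonneg _).trans hG
  have hsum : |(G * Q - S' * D⁻¹) + (S' - S) * D⁻¹| ≤ (B + 2) * E := by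
    calc _ ≤ |G * Q - S' * D⁻¹| + |S' - S| * D⁻¹ := (abs_add_le _ _).trans_eq <| by
          rw [abs_mul, abs_of_pos (inv_pos.2 (by linarith : 0 < D))]
      _ ≤ e + 2 * B * e * 2⁻¹ := by gcongr
      _ ≤ (B + 2) * E := by nlinarith
  rw [hrescale, abs_mul, abs_of_nonneg hP, mul_assoc, mul_left_comm]
  exact mul_le_mul_of_nonneg_left hsum hP

theorem summable_inv_sq_sub (a : ℤ) : Summable fun k : ℤ => (((k : ℝ) - a) ^ 2)⁻¹ := by
  have h := (Real.summable_one_div_int_pow (p := 2)).mpr one_lt_two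
  simpa [one_div, Function.comp_def] using (Equiv.subRight a).summable_iff.mpr h

theorem tsum_indicator_inv_sq_le (r : ℕ) :
    ∑' j : ℤ, {j : ℤ | (r : ℤ) < |j|}.indicator (fun j => ((j : ℝ) ^ 2)⁻¹) j ≤ 4 / (r + 1) := by
  set g : ℤ → ℝ := {j : ℤ | (r : ℤ) < |j|}.indicator fun j => ((j : ℝ) ^ 2)⁻¹
  have hg0 : ∀ j, 0 ≤ g j := fun j => Set.indicator_nonneg (fun _ _ => by positivity) j
  have hg : Summable g := .of_nonneg_of_le hg0
    (Set.indicator_le_self' fun _ _ => by positivity) (by simpa using summable_inv_sq_sub 0)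
  have hg_neg : ∀ j, g (-j) = g j := fun j => by simp [g, Set.indicator_apply]
  have hnat : ∑' n : ℕ, g n ≤ 2 / (r + 1) := by
    refine (hg.comp_injective Nat.cast_injective).tsum_le_of_sum_range_le fun N => ?_
    calc ∑ n ∈ Finset.range N, g n
        = ∑ n ∈ (Finset.range N).filter (r < ·), ((n : ℝ) ^ 2)⁻¹ := by
          rw [Finset.sum_filter]; simp [g, Set.indicator_apply]
      _ ≤ ∑ n ∈ Finset.Ioo r N, ((n : ℝ) ^ 2)⁻¹ :=
          Finset.sum_le_sum_of_subset_of_nonneg (fun n => by simp; omega)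
            (fun _ _ _ => by positivity)
      _ ≤ 2 / (r + 1) := sum_Ioo_inv_sq_le r N
  have hsplit : HasSum (fun n : ℕ => 2 * g n) (∑' j, g j) := by
    have h0 : g 0 = 0 := by simp [g]
    simpa [hg_neg, h0, two_mul] using hg.hasSum.nat_add_neg
  rw [hsplit.unique ((hg.comp_injective Nat.cast_injective).hasSum.mul_left 2)]
  calc 2 * ∑' n : ℕ, g n ≤ 2 * (2 / (r + 1)) := by gcongr
    _ = 4 / (r + 1) := by ring

theorem tsum_compl_Icc_inv_sq_sub_le (a r : ℤ) (hr : 0 ≤ r) :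
    ∑' k : ((Finset.Icc (a - r) (a + r) : Set ℤ)ᶜ : Set ℤ), (((k : ℝ) - a) ^ 2)⁻¹
      ≤ 4 / (r + 1) := by
  lift r to ℕ using hr
  rw [tsum_subtype _ fun k : ℤ => (((k : ℝ) - a) ^ 2)⁻¹, ← (Equiv.addRight a).tsum_eq]
  convert tsum_indicator_inv_sq_le r using 3 with j
  · simp only [Set.indicator_apply]
    congr 1
    · simp only [Finset.coe_Icc, Set.mem_compl_iff, Set.mem_Icc, Equiv.coe_addRight,
        Set.mem_ofPred_eq, lt_abs, eq_iff_iff]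
      omega
    · simp
  · simp

section Weights

variable {d : ℕ} {h : ℕ → ℝ} {L : ℕ → ℕ} {s : ℕ → ℝ}

theorem inv_mem_Icc_of_zpow_eq (hd : 1 ≤ d) (hh : ∀ n, 0 < h n)
    (hs : ∀ n, s n ∈ Set.Ico (0 : ℝ) 1)
    (heq : ∀ n, h n ^ (-2 : ℤ) = ((L n : ℝ) + s n) * ((L n : ℝ) + s n + d - 1)) (n : ℕ) :
    (h n)⁻¹ ∈ Set.Icc (L n : ℝ) (L n + d) := by
  have hd' : (1 : ℝ) ≤ d := by exact_mod_cast hd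
  obtain ⟨hs0, hs1⟩ := hs n
  have hsq : (h n)⁻¹ ^ 2 = (L n + s n) * (L n + s n + (d - 1)) := by
    rw [← zpow_natCast, ← zpow_neg_one, ← zpow_mul, add_sub_assoc']
    exact heq n
  have hI := mem_Icc_of_sq_eq_mul (inv_nonneg.2 (hh n).le) (by positivity) (by linarith) hsq
  exact ⟨by linarith [hI.1], by linarith [hI.2]⟩

theorem tendsto_natCast_atTop_of_zpow_eq (hd : 1 ≤ d) (hh : ∀ n, 0 < h n)
    (hto : Tendsto h atTop (𝓝 0)) (hs : ∀ n, s n ∈ Set.Ico (0 : ℝ) 1)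
    (heq : ∀ n, h n ^ (-2 : ℤ) = ((L n : ℝ) + s n) * ((L n : ℝ) + s n + d - 1)) :
    Tendsto (fun n => (L n : ℝ)) atTop atTop := by
  have hinv : Tendsto (fun n => (h n)⁻¹) atTop atTop :=
    tendsto_inv_nhdsGT_zero.comp (tendsto_nhdsWithin_iff.2 ⟨hto, .of_forall hh⟩)
  refine tendsto_atTop_mono (fun n => ?_) (tendsto_atTop_add_const_right _ (-(d : ℝ)) hinv)
  linarith [(inv_mem_Icc_of_zpow_eq hd hh hs heq n).2]

theorem inv_isEquivalent_natCast (hd : 1 ≤ d) (hh : ∀ n, 0 < h n)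
    (hto : Tendsto h atTop (𝓝 0)) (hs : ∀ n, s n ∈ Set.Ico (0 : ℝ) 1)
    (heq : ∀ n, h n ^ (-2 : ℤ) = ((L n : ℝ) + s n) * ((L n : ℝ) + s n + d - 1)) :
    (fun n => (h n)⁻¹) ~[atTop] fun n => (L n : ℝ) := by
  refine isEquivalent_of_abs_sub_le (tendsto_natCast_atTop_of_zpow_eq hd hh hto hs heq) d
    (.of_forall fun n => ?_)
  have hI := inv_mem_Icc_of_zpow_eq hd hh hs heq n
  rw [abs_le]
  constructor <;> linarith [hI.1, hI.2, (Nat.cast_nonneg d : (0 : ℝ) ≤ d)]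

theorem mult_mul_zpow_isEquivalent (hd : d = 2 ∨ d = 3) (hh : ∀ n, 0 < h n)
    (hto : Tendsto h atTop (𝓝 0)) (hs : ∀ n, s n ∈ Set.Ico (0 : ℝ) 1)
    (heq : ∀ n, h n ^ (-2 : ℤ) = ((L n : ℝ) + s n) * ((L n : ℝ) + s n + d - 1)) (k : ℤ) :
    (fun n => mult d (L n + k) * h n ^ ((d : ℤ) - 3)) ~[atTop]
      fun n => 2 / (d - 1) * (L n : ℝ) ^ 2 := by
  have hd1 : 1 ≤ d := by omega
  have hL := tendsto_natCast_atTop_of_zpow_eq hd1 hh hto hs heq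
  rcases hd with rfl | rfl
  · have hmult : (fun n => mult 2 (L n + k)) ~[atTop] fun n => 2 * (L n : ℝ) :=
      isEquivalent_of_abs_sub_le (hL.const_mul_atTop two_pos) |2 * k + 1|
        (.of_forall fun n => le_of_eq (by simp only [mult, if_pos]; push_cast; ring_nf))
    refine (hmult.mul (inv_isEquivalent_natCast hd1 hh hto hs heq)).congr_left ?_ |>.congr_right ?_
    · exact .of_forall fun n => by simp
    · exact .of_forall fun n => by norm_num; ring
  · have hmult : (fun n => ((L n : ℤ) + k + 1 : ℝ)) ~[atTop] fun n => (L n : ℝ) :=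
      isEquivalent_of_abs_sub_le hL |k + 1| (.of_forall fun n => le_of_eq (by push_cast; ring_nf))
    refine (hmult.pow 2).congr_left ?_ |>.congr_right ?_
    · exact .of_forall fun n => by simp [mult]
    · exact .of_forall fun n => by norm_num

theorem tendsto_mult_mul_zpow_div_sq (hd : d = 2 ∨ d = 3) (hh : ∀ n, 0 < h n)
    (hto : Tendsto h atTop (𝓝 0)) (hs : ∀ n, s n ∈ Set.Ico (0 : ℝ) 1)
    (heq : ∀ n, h n ^ (-2 : ℤ) = ((L n : ℝ) + s n) * ((L n : ℝ) + s n + d - 1)) (k : ℤ) :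
    Tendsto (fun n => mult d (L n + k) * h n ^ ((d : ℤ) - 3) / (2 * L n + k + s n + d - 1) ^ 2)
      atTop (𝓝 (2 * ((d : ℝ) - 1))⁻¹) := by
  have hd1 : (1 : ℝ) < d := by rcases hd with rfl | rfl <;> norm_num
  have hL := tendsto_natCast_atTop_of_zpow_eq (by omega) hh hto hs heq
  have hden : (fun n => (2 * L n + k + s n + d - 1 : ℝ)) ~[atTop] fun n => 2 * (L n : ℝ) :=
    isEquivalent_of_abs_sub_le (hL.const_mul_atTop two_pos) (|(k : ℝ)| + d) (.of_forall fun n => by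
      rw [abs_le]
      constructor <;> linarith [(hs n).1, (hs n).2, le_abs_self (k : ℝ), neg_abs_le (k : ℝ)])
  refine ((mult_mul_zpow_isEquivalent hd hh hto hs heq k).div (hden.pow 2)).symm.tendsto_nhds
    (tendsto_const_nhds.congr' ?_)
  filter_upwards [hL.eventually_gt_atTop 0] with n hn
  simp only [Pi.div_apply, Pi.pow_apply]
  field_simp

end Weights

noncomputable def windowTerm (d : ℕ) (b : ℂ × ℂ) (l : ℕ) (μ : ℝ) (k : ℤ) : ℝ :=
  ‖b.1 + (-1 : ℂ) ^ ((l : ℤ) + k) * b.2‖ ^ 2 * mult d (l + k) / (lam2 d (l + k) - μ) ^ 2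

noncomputable def windowCoeff (b : ℂ × ℂ) (ρ : ℂ) (x : ℝ) (k : ℤ) : ℝ :=
  ‖b.1 + (-1 : ℂ) ^ k * ρ * b.2‖ ^ 2 / ((k : ℝ) - x) ^ 2

theorem windowTerm_eq (d : ℕ) (b : ℂ × ℂ) (l : ℕ) (x : ℝ) (k : ℤ) :
    windowTerm d b l ((l + x) * (l + x + d - 1)) k
      = windowCoeff b ((-1) ^ l) x k * (mult d (l + k) / (2 * l + k + x + d - 1) ^ 2) := by
  have hsign : (-1 : ℂ) ^ ((l : ℤ) + k) = (-1) ^ k * (-1) ^ l := by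
    rw [zpow_add₀ (by norm_num), zpow_natCast, mul_comm]
  have hgap : lam2 d (l + k) - (l + x) * (l + x + d - 1) = (k - x) * (2 * l + k + x + d - 1) := by
    simp only [lam2]; push_cast; ring
  rw [windowTerm, windowCoeff, hsign, hgap, mul_pow, div_mul_div_comm]

theorem windowCoeff_le (b : ℂ × ℂ) (ρ : ℂ) (x : ℝ) (k : ℤ) :
    windowCoeff b ρ x k ≤ (‖b.1‖ + ‖ρ * b.2‖) ^ 2 * (((k : ℝ) - x) ^ 2)⁻¹ := by
  rw [windowCoeff, div_eq_mul_inv]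
  gcongr
  refine (norm_add_le _ _).trans_eq ?_
  rw [mul_assoc, norm_mul, norm_zpow, norm_neg, norm_one, one_zpow, one_mul]

theorem summable_windowCoeff (b : ℂ × ℂ) (ρ : ℂ) (a : ℤ) : Summable (windowCoeff b ρ a) :=
  .of_nonneg_of_le (fun _ => by unfold windowCoeff; positivity) (windowCoeff_le b ρ a)
    (by simpa using (summable_inv_sq_sub a).mul_left _)

theorem abs_tsum_sub_sum_windowCoeff_le (b : ℂ × ℂ) (ρ : ℂ) (a r : ℤ) (hr : 0 ≤ r) :
    |∑' k, windowCoeff b ρ a k - ∑ k ∈ Finset.Icc (a - r) (a + r), windowCoeff b ρ a k|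
      ≤ (‖b.1‖ + ‖ρ * b.2‖) ^ 2 * (4 / (r + 1)) := by
  have hsum := summable_windowCoeff b ρ a
  rw [← hsum.sum_add_tsum_compl (s := Finset.Icc (a - r) (a + r)), add_sub_cancel_left,
    abs_of_nonneg (tsum_nonneg fun _ => by unfold windowCoeff; positivity)]
  refine ((hsum.subtype _).tsum_le_tsum (fun k : ((Finset.Icc (a - r) (a + r) : Set ℤ)ᶜ : Set ℤ) =>
    windowCoeff_le b ρ a k) ?_).trans ?_
  · exact ((summable_inv_sq_sub a).subtype _).mul_left _
  · rw [tsum_mul_left]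
    exact mul_le_mul_of_nonneg_left (by simpa using tsum_compl_Icc_inv_sq_sub_le a r hr)
      (by positivity)

theorem tendsto_windowCoeff {β : ℕ → ℂ × ℂ} {βl : ℂ × ℂ} (hβ : Tendsto β atTop (𝓝 βl))
    {s : ℕ → ℝ} {σ : ℕ} (hsto : Tendsto s atTop (𝓝 (σ : ℝ))) {ρ c : ℂ}
    (hc : Tendsto (fun n => ((β n).1 + (-1 : ℂ) ^ σ * ρ * (β n).2) / (((σ : ℝ) - s n : ℝ) : ℂ))
      atTop (𝓝 c)) (k : ℤ) :
    Tendsto (fun n => windowCoeff (β n) ρ (s n) k) atTop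
      (𝓝 (if k = σ then ‖c‖ ^ 2 else windowCoeff βl ρ σ k)) := by
  split_ifs with hk
  · subst hk
    convert hc.norm.pow 2 using 2 with n
    simp only [windowCoeff, norm_div, div_pow, Complex.norm_real, Real.norm_eq_abs, sq_abs,
      Int.cast_natCast, zpow_natCast]
  · have hcont : Continuous fun b : ℂ × ℂ => ‖b.1 + (-1 : ℂ) ^ k * ρ * b.2‖ ^ 2 := by fun_prop
    refine ((hcont.tendsto βl).comp hβ).div ((tendsto_const_nhds.sub hsto).pow 2) ?_
    exact pow_ne_zero 2 (sub_ne_zero.2 (by exact_mod_cast hk))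

section Window

variable {d : ℕ} {h : ℕ → ℝ} {L : ℕ → ℕ} {s : ℕ → ℝ} {β : ℕ → ℂ × ℂ} {βl : ℂ × ℂ} {ρ c : ℂ}
  {σ : ℕ}

theorem tendsto_windowTerm_mul_zpow (hd : d = 2 ∨ d = 3) (hh : ∀ n, 0 < h n)
    (hto : Tendsto h atTop (𝓝 0)) (hs : ∀ n, s n ∈ Set.Ico (0 : ℝ) 1)
    (heq : ∀ n, h n ^ (-2 : ℤ) = ((L n : ℝ) + s n) * ((L n : ℝ) + s n + d - 1))
    (hβ : Tendsto β atTop (𝓝 βl)) (hρ : ∀ n, ρ = (-1 : ℂ) ^ (L n))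
    (hsto : Tendsto s atTop (𝓝 (σ : ℝ)))
    (hc : Tendsto (fun n => ((β n).1 + (-1 : ℂ) ^ σ * ρ * (β n).2) / (((σ : ℝ) - s n : ℝ) : ℂ))
      atTop (𝓝 c)) (k : ℤ) :
    Tendsto (fun n => windowTerm d (β n) (L n) (h n ^ (-2 : ℤ)) k * h n ^ ((d : ℤ) - 3)) atTop
      (𝓝 ((if k = σ then ‖c‖ ^ 2 else windowCoeff βl ρ σ k) * (2 * ((d : ℝ) - 1))⁻¹)) := by
  refine ((tendsto_windowCoeff hβ hsto hc k).mul
    (tendsto_mult_mul_zpow_div_sq hd hh hto hs heq k)).congr fun n => ?_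
  rw [heq, windowTerm_eq, ← hρ n]
  ring

theorem tendsto_sum_windowTerm_mul_zpow (hd : d = 2 ∨ d = 3) (hh : ∀ n, 0 < h n)
    (hto : Tendsto h atTop (𝓝 0)) (hs : ∀ n, s n ∈ Set.Ico (0 : ℝ) 1)
    (heq : ∀ n, h n ^ (-2 : ℤ) = ((L n : ℝ) + s n) * ((L n : ℝ) + s n + d - 1))
    (hβ : Tendsto β atTop (𝓝 βl)) (hρ : ∀ n, ρ = (-1 : ℂ) ^ (L n))
    (hsto : Tendsto s atTop (𝓝 (σ : ℝ)))
    (hc : Tendsto (fun n => ((β n).1 + (-1 : ℂ) ^ σ * ρ * (β n).2) / (((σ : ℝ) - s n : ℝ) : ℂ))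
      atTop (𝓝 c)) {W : Finset ℤ} (hσW : (σ : ℤ) ∈ W) :
    Tendsto (fun n => (∑ k ∈ W, windowTerm d (β n) (L n) (h n ^ (-2 : ℤ)) k) * h n ^ ((d : ℤ) - 3))
      atTop (𝓝 ((‖c‖ ^ 2 + ∑ k ∈ W, windowCoeff βl ρ σ k) * (2 * ((d : ℝ) - 1))⁻¹)) := by
  have hlim := tendsto_finsetSum W fun k _ =>
    tendsto_windowTerm_mul_zpow hd hh hto hs heq hβ hρ hsto hc k
  simp only [← Finset.sum_mul] at hlim
  convert hlim using 3
  -- the `k = σ` coefficient vanishes only because `x / 0 = 0`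
  have hσ : windowCoeff βl ρ σ σ = 0 := by simp [windowCoeff]
  rw [← Finset.add_sum_erase W _ hσW, ← Finset.add_sum_erase W _ hσW, if_pos rfl, hσ, zero_add]
  exact congrArg _ (Finset.sum_congr rfl fun k hk => (if_neg (Finset.ne_of_mem_erase hk)).symm)

end Window

theorem stmt_8_general (d : ℕ) (hd : d = 2 ∨ d = 3)
    (h : ℕ → ℝ) (hh : ∀ n, h n ∈ Set.Ioo (0 : ℝ) 1)
    (hto : Tendsto h atTop (nhds 0))
    (L : ℕ → ℕ) (s : ℕ → ℝ) (hs : ∀ n, s n ∈ Set.Ico (0 : ℝ) 1)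
    (heq : ∀ n, (h n) ^ (-2 : ℤ) =
      ((L n : ℝ) + s n) * ((L n : ℝ) + s n + (d : ℝ) - 1))
    (β : ℕ → ℂ × ℂ) (βl : ℂ × ℂ) (hβ : Tendsto β atTop (nhds βl))
    (ρ : ℂ) (hρ : ∀ n, ρ = (-1 : ℂ) ^ (L n))
    (σ : ℕ)
    (hsto : Tendsto s atTop (nhds (σ : ℝ)))
    (c : ℂ)
    (hc : Tendsto
      (fun n => ((β n).1 + (-1 : ℂ) ^ σ * ρ * (β n).2) / (((σ : ℝ) - s n : ℝ) : ℂ))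
      atTop (nhds c)) :
    ∃ C : ℝ, 1 < C ∧ ∀ Υ : ℕ, 1 ≤ Υ → ∃ ν : ℕ, ∀ n ≥ ν,
      |(∑ k ∈ Finset.Icc ((σ : ℤ) - (2 * (Υ : ℤ) - 1)) ((σ : ℤ) + (2 * (Υ : ℤ) - 1)),
          ‖(β n).1 + (-1 : ℂ) ^ ((L n : ℤ) + k) * (β n).2‖ ^ 2 *
            mult d ((L n : ℤ) + k) /
              (lam2 d ((L n : ℤ) + k) - (h n) ^ (-2 : ℤ)) ^ 2)
        - (‖c‖ ^ 2 + ∑' k : {k : ℤ // k ≠ (σ : ℤ)},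
            ‖βl.1 + (-1 : ℂ) ^ (k : ℤ) * ρ * βl.2‖ ^ 2 / (((k : ℤ) : ℝ) - (σ : ℝ)) ^ 2)
            * (h n) ^ ((3 : ℤ) - (d : ℤ)) / (2 * ((d : ℝ) - 1))|
      ≤ C * (h n) ^ ((3 : ℤ) - (d : ℤ)) *
          ((Υ : ℝ) * h n + |s n - (σ : ℝ)| + ‖β n - βl‖
            + ‖c - ((β n).1 + (-1 : ℂ) ^ σ * ρ * (β n).2) / (((σ : ℝ) - s n : ℝ) : ℂ)‖
            + (Υ : ℝ)⁻¹) := by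
  set B := (‖βl.1‖ + ‖ρ * βl.2‖) ^ 2
  refine ⟨B + 2, by linarith [sq_nonneg (‖βl.1‖ + ‖ρ * βl.2‖)], fun Υ hΥ => ?_⟩
  set W := Finset.Icc ((σ : ℤ) - (2 * Υ - 1)) (σ + (2 * Υ - 1))
  have hlim := tendsto_sum_windowTerm_mul_zpow hd (fun n => (hh n).1) hto hs heq hβ hρ hsto hc
    (W := W) (by simp [W]; omega)
  obtain ⟨ν, hν⟩ := Metric.tendsto_atTop.1 hlim (Υ : ℝ)⁻¹ (by positivity)
  have htail : |‖c‖ ^ 2 + ∑ k ∈ W, windowCoeff βl ρ σ k - (‖c‖ ^ 2 + ∑' k, windowCoeff βl ρ σ k)|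
      ≤ 2 * B * (Υ : ℝ)⁻¹ := by
    rw [add_sub_add_left_eq_sub, abs_sub_comm]
    convert abs_tsum_sub_sum_windowCoeff_le βl ρ σ (2 * Υ - 1) (by omega) using 1 <;> push_cast
    · rfl
    · field_simp; ring
  refine ⟨ν, fun n hn => ?_⟩
  change |∑ k ∈ W, windowTerm d (β n) (L n) (h n ^ (-2 : ℤ)) k
    - (‖c‖ ^ 2 + ∑' k : {k : ℤ | k ≠ σ}, windowCoeff βl ρ σ k) * _ / _| ≤ _
  have hsupp : Function.support (windowCoeff βl ρ σ) ⊆ {k | k ≠ (σ : ℤ)} :=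
    fun k hk hkσ => hk (by simp [windowCoeff, hkσ])
  rw [tsum_subtype_eq_of_support_subset hsupp]
  have hPQ : h n ^ ((3 : ℤ) - d) * h n ^ ((d : ℤ) - 3) = 1 := by
    rw [← zpow_add₀ (hh n).1.ne']; simp
  refine abs_sub_mul_div_le hPQ (zpow_pos (hh n).1 _).le
    (by rcases hd with rfl | rfl <;> norm_num) (by positivity)
    (by simpa [Real.dist_eq] using (hν n hn).le) htail (le_add_of_nonneg_left ?_)
  have := (hh n).1
  positivity

/-- Scenario 3 norm asymptotics: with `σ_n → σ ∈ {0,1}`,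
`β₊ + (−1)^σ ρ β₋ = 0` and `c = lim (β_{n,+} + (−1)^σ ρ β_{n,−})/(σ − σ_n)`,
the window sum over `|k−σ| ≤ 2Υ−1` equals `C₀² h_n^{3−d}/(2(d−1))` up to the
stated error, with `C₀² = |c|² + Σ_{k≠σ} |β₊ + (−1)^k ρ β₋|²/(k−σ)²`. -/
theorem stmt_8 (d : ℕ) (hd : d = 2 ∨ d = 3)
    (h : ℕ → ℝ) (hh : ∀ n, h n ∈ Set.Ioo (0 : ℝ) 1)
    (hto : Tendsto h atTop (nhds 0))
    (hspec : ∀ n, ∀ l : ℕ, (h n) ^ (-2 : ℤ) ≠ lam2 d (l : ℤ))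
    (L : ℕ → ℕ) (s : ℕ → ℝ) (hs : ∀ n, s n ∈ Set.Ico (0 : ℝ) 1)
    (heq : ∀ n, (h n) ^ (-2 : ℤ) =
      ((L n : ℝ) + s n) * ((L n : ℝ) + s n + (d : ℝ) - 1))
    (β : ℕ → ℂ × ℂ) (βl : ℂ × ℂ) (hβ : Tendsto β atTop (nhds βl))
    (ρ : ℂ) (hρ : ∀ n, ρ = (-1 : ℂ) ^ (L n))
    (σ : ℕ) (hσ : σ = 0 ∨ σ = 1)
    (hsto : Tendsto s atTop (nhds (σ : ℝ)))
    (hcancel : βl.1 + (-1 : ℂ) ^ σ * ρ * βl.2 = 0)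
    (c : ℂ)
    (hc : Tendsto
      (fun n => ((β n).1 + (-1 : ℂ) ^ σ * ρ * (β n).2) / (((σ : ℝ) - s n : ℝ) : ℂ))
      atTop (nhds c)) :
    ∃ C : ℝ, 1 < C ∧ ∀ Υ : ℕ, 1 ≤ Υ → ∃ ν : ℕ, ∀ n ≥ ν,
      |(∑ k ∈ Finset.Icc ((σ : ℤ) - (2 * (Υ : ℤ) - 1)) ((σ : ℤ) + (2 * (Υ : ℤ) - 1)),
          ‖(β n).1 + (-1 : ℂ) ^ ((L n : ℤ) + k) * (β n).2‖ ^ 2 *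
            mult d ((L n : ℤ) + k) /
              (lam2 d ((L n : ℤ) + k) - (h n) ^ (-2 : ℤ)) ^ 2)
        - (‖c‖ ^ 2 + ∑' k : {k : ℤ // k ≠ (σ : ℤ)},
            ‖βl.1 + (-1 : ℂ) ^ (k : ℤ) * ρ * βl.2‖ ^ 2 / (((k : ℤ) : ℝ) - (σ : ℝ)) ^ 2)
            * (h n) ^ ((3 : ℤ) - (d : ℤ)) / (2 * ((d : ℝ) - 1))|
      ≤ C * (h n) ^ ((3 : ℤ) - (d : ℤ)) *
          ((Υ : ℝ) * h n + |s n - (σ : ℝ)| + ‖β n - βl‖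
            + ‖c - ((β n).1 + (-1 : ℂ) ^ σ * ρ * (β n).2) / (((σ : ℝ) - s n : ℝ) : ℂ)‖
            + (Υ : ℝ)⁻¹) :=
  stmt_8_general d hd h hh hto L s hs heq β βl hβ ρ hρ σ hsto c hc
end

section
/- Let d ∈ {2,3}. Let (h_n) ⊂ (0,1) with h_n → 0⁺ and h_n^{−2} = λ_{ℓ_n}² for all n (so σ(h_n) = 0), and assume ρ := (−1)^{ℓ_n} is constant in n. Let β = (β₊, β₋) ∈ ℂ² satisfy β₋ + ρ β₊ = 0, and set D_β² := Σ_{k∈ℤ, k≠0} |β₊ + (−1)^k ρ β₋|²/k². Then there exists C > 1 such that for every integer Υ ≥ 1 there exists ν ∈ ℕ such that for all n ≥ ν: |Σ over integers k with 1 ≤ |k| ≤ 2Υ−1 of |β₊ + (−1)^{ℓ_n+k} β₋|² · m_{ℓ_n+k}/(λ_{ℓ_n+k}² − λ_{ℓ_n}²)² − D_β² h_n^{3−d}/(2(d−1))| ≤ C h_n^{3−d}(Υ h_n + Υ^{−1}). -/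
set_option maxHeartbeats 1000000

open Filter Finset Function

lemma sum_inv_sq_int_bound (m : ℕ) (hm : 1 ≤ m) (s : Finset ℤ)
    (hs : ∀ k ∈ s, (m : ℤ) ≤ |k|) :
    ∑ k ∈ s, (((k : ℝ)) ^ 2)⁻¹ ≤ 4 / m := by
  classical
  have key : ∀ t : Finset ℕ, (∀ j ∈ t, m ≤ j) → ∑ j ∈ t, ((j : ℝ) ^ 2)⁻¹ ≤ 2 / m := by
    intro t ht
    have hsub : t ⊆ Finset.Ioo (m - 1) (t.sup id + 1) := by
      intro j hj
      have h1 := ht j hj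
      have h2 : id j ≤ t.sup id := Finset.le_sup hj
      simp only [Finset.mem_Ioo, id] at h2 ⊢
      omega
    calc ∑ j ∈ t, ((j : ℝ) ^ 2)⁻¹
        ≤ ∑ j ∈ Finset.Ioo (m - 1) (t.sup id + 1), ((j : ℝ) ^ 2)⁻¹ := by
          apply Finset.sum_le_sum_of_subset_of_nonneg hsub
          intro i _ _; positivity
      _ ≤ 2 / ((m - 1 : ℕ) + 1) := sum_Ioo_inv_sq_le (α := ℝ) (m - 1) (t.sup id + 1)
      _ = 2 / m := by rw [Nat.cast_sub hm]; norm_num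
  have cast_eq : ∀ k : ℤ, (((k.natAbs : ℕ) : ℝ) ^ 2)⁻¹ = (((k : ℝ)) ^ 2)⁻¹ := by
    intro k; rw [Nat.cast_natAbs, Int.cast_abs, sq_abs]
  have part : ∀ u : Finset ℤ, u ⊆ s →
      (∀ x ∈ u, ∀ y ∈ u, x.natAbs = y.natAbs → x = y) →
      ∑ k ∈ u, (((k : ℝ)) ^ 2)⁻¹ ≤ 2 / m := by
    intro u hus hinj
    have h1 : ∑ k ∈ u, (((k : ℝ)) ^ 2)⁻¹
        = ∑ j ∈ u.image Int.natAbs, ((j : ℝ) ^ 2)⁻¹ := by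
      rw [Finset.sum_image hinj]
      exact Finset.sum_congr rfl fun k _ => (cast_eq k).symm
    rw [h1]
    apply key
    intro j hj
    obtain ⟨k, hk, rfl⟩ := Finset.mem_image.mp hj
    have := hs k (hus hk)
    rw [Int.abs_eq_natAbs] at this
    omega
  have hsplit : s = (s.filter (fun k => 0 < k)) ∪ (s.filter (fun k => ¬ 0 < k)) :=
    (Finset.filter_union_filter_not_eq _ s).symm
  rw [hsplit, Finset.sum_union (Finset.disjoint_filter_filter_not s s _)]
  have h1 := part (s.filter (fun k => 0 < k)) (Finset.filter_subset _ s) (by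
    intro x hx y hy hxy
    simp only [Finset.mem_filter] at hx hy
    omega)
  have h2 := part (s.filter (fun k => ¬ 0 < k)) (Finset.filter_subset _ s) (by
    intro x hx y hy hxy
    simp only [Finset.mem_filter] at hx hy
    omega)
  have : (4 : ℝ) / m = 2 / m + 2 / m := by ring
  rw [this]
  exact add_le_add h1 h2

lemma core_d2 (h u κ Υ : ℝ) (h0 : 0 < h) (h1 : h < 1) (hΥ : 1 ≤ Υ)
    (hu2 : 2 ≤ h * u) (hid : h ^ 2 * (u ^ 2 - 1) = 4)
    (hκ : |κ| ≤ 2 * Υ - 1) (hκ1 : 1 ≤ |κ|) (hu400 : 400 * Υ ≤ u) :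
    |(u + 2 * κ) / (u + κ) ^ 2 - h / 2| ≤ 2 * κ ^ 2 * h ^ 3 := by
  have hup : (0:ℝ) < u := by nlinarith
  have hκu : |κ| ≤ u / 2 := by nlinarith [abs_nonneg κ]
  have huk : u / 2 ≤ u + κ := by
    have := neg_abs_le κ; nlinarith
  have hukpos : 0 < u + κ := by linarith
  have he0 : 0 ≤ h * u - 2 := by linarith
  have hemul : (h * u - 2) * (h * u + 2) = h ^ 2 := by nlinarith
  have he : h * u - 2 ≤ h ^ 2 / 4 := by nlinarith
  have hκsq : 1 ≤ κ ^ 2 := by nlinarith [sq_abs κ]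
  have hinvu : (u:ℝ)⁻¹ ≤ h / 2 := by
    rw [inv_le_comm₀ hup (by linarith : (0:ℝ) < h / 2), inv_div, div_le_iff₀ h0]
    nlinarith
  have hw : 1 ≤ h * (u + κ) := by nlinarith
  have key1 : (u + 2 * κ) / (u + κ) ^ 2 - u⁻¹ = -(κ ^ 2 / (u * (u + κ) ^ 2)) := by
    field_simp
    ring
  have hb1 : κ ^ 2 / (u * (u + κ) ^ 2) ≤ κ ^ 2 * h ^ 3 / 2 := by
    rw [div_le_iff₀ (by positivity)]
    have A2 : 2 ≤ (h * u) * (h * (u + κ)) ^ 2 := by nlinarith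
    have : κ ^ 2 * h ^ 3 / 2 * (u * (u + κ) ^ 2) = κ ^ 2 / 2 * ((h * u) * (h * (u + κ)) ^ 2) := by
      ring
    rw [this]
    nlinarith [sq_nonneg κ]
  have hb2 : |u⁻¹ - h / 2| ≤ h ^ 3 := by
    have hd2 : 0 ≤ h / 2 - u⁻¹ := by linarith
    have e2 : h / 2 - u⁻¹ = (h * u - 2) / (2 * u) := by
      field_simp
    rw [abs_sub_comm, abs_of_nonneg hd2, e2, div_le_iff₀ (by linarith : (0:ℝ) < 2 * u)]
    nlinarith [mul_nonneg (sq_nonneg h) he0, he, sq_nonneg h]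
  calc |(u + 2 * κ) / (u + κ) ^ 2 - h / 2|
      ≤ |(u + 2 * κ) / (u + κ) ^ 2 - u⁻¹| + |u⁻¹ - h / 2| := abs_sub_le _ _ _
    _ ≤ κ ^ 2 * h ^ 3 / 2 + h ^ 3 := by
        refine add_le_add ?_ hb2
        rw [key1, abs_neg, abs_of_nonneg (by positivity)]
        exact hb1
    _ ≤ 2 * κ ^ 2 * h ^ 3 := by
        nlinarith [mul_nonneg (by linarith : (0:ℝ) ≤ κ ^ 2 - 1) (pow_nonneg h0.le 3)]

lemma core_d3 (h u κ Υ : ℝ) (h0 : 0 < h) (h1 : h < 1) (hΥ : 1 ≤ Υ)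
    (hu2 : 2 ≤ h * u)
    (hκ : |κ| ≤ 2 * Υ - 1) (hu400 : 400 * Υ ≤ u) :
    |(u / 2 + κ) ^ 2 / (u + κ) ^ 2 - 1 / 4| ≤ 3 * Υ * h := by
  have hup : (0:ℝ) < u := by nlinarith
  have hκu : |κ| ≤ u / 2 := by nlinarith [abs_nonneg κ]
  have huk : u / 2 ≤ u + κ := by
    have := neg_abs_le κ; nlinarith
  have hukpos : 0 < u + κ := by linarith
  have key : (u / 2 + κ) ^ 2 / (u + κ) ^ 2 - 1 / 4 = κ * (2 * u + 3 * κ) / (4 * (u + κ) ^ 2) := by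
    field_simp
    ring
  rw [key, abs_div, abs_of_nonneg (by positivity : (0:ℝ) ≤ 4 * (u + κ) ^ 2)]
  rw [div_le_iff₀ (by positivity)]
  have habs : |κ * (2 * u + 3 * κ)| ≤ (2 * Υ - 1) * (3 * u) := by
    rw [abs_mul]
    have h2 : |2 * u + 3 * κ| ≤ 3 * u := by
      rw [abs_le]
      constructor <;> nlinarith [neg_abs_le κ, le_abs_self κ]
    exact mul_le_mul hκ h2 (abs_nonneg _) (by nlinarith)
  refine le_trans habs ?_
  have hq : u ^ 2 / 4 ≤ (u + κ) ^ 2 := by nlinarith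
  have f1 := mul_le_mul_of_nonneg_left hq (by positivity : (0:ℝ) ≤ 12 * Υ * h)
  have f2 := mul_le_mul_of_nonneg_left hu2 (by positivity : (0:ℝ) ≤ 3 * Υ * u)
  nlinarith [f1, f2, hup]

lemma norm_coeff (βp : ℂ) (k : ℤ) :
    ‖βp * (1 - (-1:ℂ) ^ k)‖ ^ 2 = if Odd k then 4 * ‖βp‖ ^ 2 else 0 := by
  rcases Int.even_or_odd k with hk | hk
  · rw [if_neg (by simpa using hk), hk.neg_one_zpow]
    simp
  · rw [if_pos hk, hk.neg_one_zpow]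
    rw [show (1 : ℂ) - -1 = 2 by ring, norm_mul]
    have : ‖(2:ℂ)‖ = 2 := by norm_num
    rw [this]
    ring

lemma coeff2 (ρ βp βm : ℂ) (hρ2 : ρ ^ 2 = 1) (hβm : βm = -(ρ * βp)) (k : ℤ) :
    ‖βp + (-1:ℂ) ^ k * ρ * βm‖ ^ 2 = if Odd k then 4 * ‖βp‖ ^ 2 else 0 := by
  have e : βp + (-1:ℂ) ^ k * ρ * βm = βp * (1 - (-1:ℂ) ^ k) := by
    rw [hβm]
    have e2 : (-1:ℂ) ^ k * ρ * -(ρ * βp) = -(((-1:ℂ) ^ k) * βp * ρ ^ 2) := by ring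
    rw [e2, hρ2]
    ring
  rw [e, norm_coeff]

lemma coeff1 (L : ℕ) (ρ βp βm : ℂ) (hρ : ρ = (-1:ℂ) ^ L) (hρ2 : ρ ^ 2 = 1)
    (hβm : βm = -(ρ * βp)) (k : ℤ) :
    ‖βp + (-1:ℂ) ^ ((L:ℤ) + k) * βm‖ ^ 2 = if Odd k then 4 * ‖βp‖ ^ 2 else 0 := by
  have hsplit : (-1:ℂ) ^ ((L:ℤ) + k) = ρ * (-1:ℂ) ^ k := by
    rw [zpow_add₀ (by norm_num : (-1:ℂ) ≠ 0), zpow_natCast, hρ]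
  have e : βp + (-1:ℂ) ^ ((L:ℤ) + k) * βm = βp * (1 - (-1:ℂ) ^ k) := by
    rw [hsplit, hβm]
    have e2 : ρ * (-1:ℂ) ^ k * -(ρ * βp) = -(((-1:ℂ) ^ k) * βp * ρ ^ 2) := by ring
    rw [e2, hρ2]
    ring
  rw [e, norm_coeff]

lemma Fsummable (A : ℝ) (hA : 0 ≤ A) :
    Summable (fun k : ℤ => (if Odd k then 4 * A else 0) / (k:ℝ) ^ 2) := by
  have hg : Summable (fun k : ℤ => (4 * A) * (1 / (k:ℝ) ^ 2)) :=
    (Real.summable_one_div_int_pow.mpr one_lt_two).mul_left _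
  apply Summable.of_nonneg_of_le _ _ hg
  · intro k
    positivity
  · intro k
    rcases em (Odd k) with hk | hk
    · rw [if_pos hk, div_eq_mul_one_div]
    · rw [if_neg hk, zero_div]
      positivity

lemma tail_le (A : ℝ) (hA : 0 ≤ A) (Υ : ℕ) (hΥ : 1 ≤ Υ) :
    ∑' (x : ((↑(Finset.Icc (-(2*(Υ:ℤ)-1)) (2*(Υ:ℤ)-1)) : Set ℤ)ᶜ : Set ℤ)),
      (if Odd (x:ℤ) then 4*A else 0) / ((x:ℤ):ℝ)^2 ≤ 8*A/Υ := by
  apply Summable.tsum_le_of_sum_le ((Fsummable A hA).subtype _)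
  intro t
  have step1 : ∑ x ∈ t, (if Odd (x:ℤ) then 4*A else 0) / ((x:ℤ):ℝ)^2
      ≤ ∑ x ∈ t, 4*A*((((x:ℤ):ℝ))^2)⁻¹ := by
    apply Finset.sum_le_sum
    intro x _
    rcases em (Odd (x:ℤ)) with hk | hk
    · rw [if_pos hk, div_eq_mul_inv]
    · rw [if_neg hk, zero_div]
      positivity
  refine step1.trans ?_
  rw [← Finset.mul_sum]
  have step2 : ∑ x ∈ t, ((((x:ℤ):ℝ))^2)⁻¹
      = ∑ k ∈ t.image Subtype.val, (((k:ℝ))^2)⁻¹ := by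
    rw [Finset.sum_image (fun x _ y _ hxy => Subtype.val_injective hxy)]
  rw [step2]
  have step3 := sum_inv_sq_int_bound (2*Υ) (by omega) (t.image Subtype.val) ?_
  · calc 4*A*(∑ k ∈ t.image Subtype.val, (((k:ℝ))^2)⁻¹)
        ≤ 4*A*(4/(2*Υ)) := by
          apply mul_le_mul_of_nonneg_left _ (by positivity)
          exact_mod_cast step3
      _ = 8*A/Υ := by
          field_simp
          ring
  · intro k hk
    obtain ⟨x, hx, rfl⟩ := Finset.mem_image.mp hk
    have hmem := x.2
    simp only [Set.mem_compl_iff, Finset.coe_Icc, Set.mem_Icc, not_and_or, not_le] at hmem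
    push_cast
    rcases le_or_gt 0 (x:ℤ) with hx0 | hx0
    · rw [abs_of_nonneg hx0]
      rcases hmem with hc | hc <;> omega
    · rw [abs_of_neg hx0]
      rcases hmem with hc | hc <;> omega

/-- Scenario 4 norm asymptotics: with `h_n⁻² = λ_{ℓ_n}²`,
`ρ = (−1)^{ℓ_n}` constant, and `β₋ + ρ β₊ = 0`, the window sum over `1 ≤ |k| ≤ 2Υ−1`
of `|β₊ + (−1)^{ℓ_n+k} β₋|² m_{ℓ_n+k}/(λ_{ℓ_n+k}² − λ_{ℓ_n}²)²` equals
`D_β² h_n^{3−d}/(2(d−1))` up to `C h_n^{3−d}(Υ h_n + Υ⁻¹)`, where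
`D_β² = Σ_{k≠0} |β₊ + (−1)^k ρ β₋|²/k²`. -/
theorem stmt_9 (d : ℕ) (hd : d = 2 ∨ d = 3)
    (h : ℕ → ℝ) (hh : ∀ n, h n ∈ Set.Ioo (0 : ℝ) 1)
    (hto : Tendsto h atTop (nhds 0))
    (L : ℕ → ℕ)
    (heig : ∀ n, (h n) ^ (-2 : ℤ) = lam2 d (L n : ℤ))
    (ρ : ℂ) (hρ : ∀ n, ρ = (-1 : ℂ) ^ (L n))
    (βp βm : ℂ) (hcancel : βm + ρ * βp = 0) :
    ∃ C : ℝ, 1 < C ∧ ∀ Υ : ℕ, 1 ≤ Υ → ∃ ν : ℕ, ∀ n ≥ ν,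
      |(∑ k ∈ (Finset.Icc (-(2 * (Υ : ℤ) - 1)) (2 * (Υ : ℤ) - 1)).erase 0,
          ‖βp + (-1 : ℂ) ^ ((L n : ℤ) + k) * βm‖ ^ 2 *
            mult d ((L n : ℤ) + k) /
              (lam2 d ((L n : ℤ) + k) - lam2 d (L n : ℤ)) ^ 2)
        - (∑' k : {k : ℤ // k ≠ 0},
            ‖βp + (-1 : ℂ) ^ (k : ℤ) * ρ * βm‖ ^ 2 / ((k : ℤ) : ℝ) ^ 2)
            * (h n) ^ ((3 : ℤ) - (d : ℤ)) / (2 * ((d : ℝ) - 1))|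
      ≤ C * (h n) ^ ((3 : ℤ) - (d : ℤ)) * ((Υ : ℝ) * h n + (Υ : ℝ)⁻¹) := by
  classical
  have hβm : βm = -(ρ * βp) := eq_neg_of_add_eq_zero_left hcancel
  have hρ2 : ρ ^ 2 = 1 := by
    rw [hρ 0, ← pow_mul, mul_comm (L 0) 2, pow_mul]
    norm_num
  set A := ‖βp‖ ^ 2 with hAdef
  have hA : 0 ≤ A := sq_nonneg _
  refine ⟨100 * A + 2, by linarith, ?_⟩
  intro Υ hΥ
  have hΥR : (1:ℝ) ≤ (Υ:ℝ) := by exact_mod_cast hΥ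
  have hεpos : (0:ℝ) < 1 / (400 * ((Υ:ℝ) + 1)) := by positivity
  have hev : ∀ᶠ n in atTop, h n < 1 / (400 * ((Υ:ℝ) + 1)) :=
    hto.eventually (gt_mem_nhds hεpos)
  obtain ⟨ν, hν⟩ := eventually_atTop.mp hev
  refine ⟨ν, fun n hn => ?_⟩
  obtain ⟨h0, h1⟩ := hh n
  have hsm := hν n hn
  set l := L n with hldef
  set u : ℝ := 2 * (l:ℝ) + (d:ℝ) - 1 with hudef
  have dge : (2:ℝ) ≤ (d:ℝ) := by rcases hd with rfl | rfl <;> norm_num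
  have dle : (d:ℝ) ≤ 3 := by rcases hd with rfl | rfl <;> norm_num
  have hxpos : (0:ℝ) ≤ (l:ℝ) := Nat.cast_nonneg l
  have hup : (0:ℝ) < u := by rw [hudef]; linarith
  -- eigenvalue relation
  have hkey : (h n) ^ 2 * ((l:ℝ) * ((l:ℝ) + (d:ℝ) - 1)) = 1 := by
    have e := heig n
    rw [lam2] at e
    have e2 : (h n) ^ (-2:ℤ) = ((h n)^2)⁻¹ := by
      rw [zpow_neg, zpow_two, sq]
    rw [e2] at e
    push_cast at e
    have hne : ((h n)^2) ≠ 0 := by positivity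
    field_simp at e
    linarith [e]
  have husq : (h n * u)^2 = 4 + (h n)^2*((d:ℝ)-1)^2 := by
    rw [hudef]
    linear_combination (4:ℝ) * hkey
  have hu2 : 2 ≤ h n * u := by
    nlinarith [husq, mul_pos h0 hup, mul_nonneg (sq_nonneg (h n)) (sq_nonneg ((d:ℝ)-1))]
  have hh2 : (h n)^2 ≤ 1 := by nlinarith
  have hdd : ((d:ℝ)-1)^2 ≤ 4 := by nlinarith
  have hu3 : h n * u ≤ 3 := by
    nlinarith [husq, hu2, hh2, hdd, sq_nonneg ((d:ℝ)-1), mul_nonneg (sq_nonneg (h n)) (sq_nonneg ((d:ℝ)-1))]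
  have hsm' : h n * (400*((Υ:ℝ)+1)) < 1 := by
    rw [lt_div_iff₀ (by positivity : (0:ℝ) < 400 * ((Υ:ℝ) + 1))] at hsm
    exact hsm
  have hu400 : 400*(Υ:ℝ) ≤ u := by
    by_contra hcon
    push_neg at hcon
    have := mul_lt_mul_of_pos_left hcon h0
    nlinarith [hu2, hsm', h0]
  have hΥh1 : (Υ:ℝ) * h n ≤ 1 := by nlinarith [hsm', h0]
  have hzp : (0:ℝ) < (h n)^((3:ℤ) - (d:ℤ)) := zpow_pos h0 _
  set Z : ℝ := (h n)^((3:ℤ) - (d:ℤ)) with hZdef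
  set W : Finset ℤ := Finset.Icc (-(2*(Υ:ℤ)-1)) (2*(Υ:ℤ)-1) with hWdef
  set F : ℤ → ℝ := fun k => (if Odd k then 4*A else 0) / (k:ℝ)^2 with hFdef
  set c : ℝ := Z / (2*((d:ℝ)-1)) with hcdef
  have hc0 : 0 ≤ c := by
    rw [hcdef]
    apply div_nonneg hzp.le
    linarith
  have hcle : c ≤ Z / 2 := by
    rw [hcdef]
    apply div_le_div_of_nonneg_left hzp.le (by linarith) (by linarith)
  -- rewrite the tsum
  have hF0 : F 0 = 0 := by
    show (if Odd (0:ℤ) then 4*A else 0) / ((0:ℤ):ℝ)^2 = 0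
    norm_num
  have hTrw : (∑' k : {k : ℤ // k ≠ 0},
      ‖βp + (-1 : ℂ) ^ (k : ℤ) * ρ * βm‖ ^ 2 / ((k : ℤ) : ℝ) ^ 2) = ∑' k : ℤ, F k := by
    have e1 : ∀ k : {k : ℤ // k ≠ 0},
        ‖βp + (-1 : ℂ) ^ (k : ℤ) * ρ * βm‖ ^ 2 / ((k : ℤ) : ℝ) ^ 2 = F (k:ℤ) := by
      intro k
      simp only [hFdef]
      rw [coeff2 ρ βp βm hρ2 hβm]
    rw [tsum_congr e1]
    exact tsum_subtype_eq_of_support_subset (by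
      intro k hk
      simp only [Function.mem_support] at hk
      intro hk0
      subst hk0
      exact hk hF0)
  have hsum := Fsummable A hA
  have hFsum : Summable F := by rw [hFdef]; exact hsum
  have hsplit := Summable.sum_add_tsum_compl (s := W) hFsum
  rw [hTrw]
  set tail := ∑' (x : ((W : Set ℤ)ᶜ : Set ℤ)), F (x : ℤ) with htaildef
  have hFnn : ∀ k : ℤ, 0 ≤ F k := by
    intro k
    show 0 ≤ (if Odd k then 4*A else 0) / (k:ℝ)^2
    apply div_nonneg _ (sq_nonneg _)
    split_ifs
    · linarith
    · exact le_rfl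
  have htail0 : 0 ≤ tail := tsum_nonneg (fun x => hFnn _)
  have htailB : tail ≤ 8*A/(Υ:ℝ) := tail_le A hA Υ hΥ
  set T := ∑' (k : ℤ), F k with hTdef
  have hTval : T = ∑ k ∈ W, F k + tail := hsplit.symm
  -- per-term bound
  have hper : ∀ k ∈ W.erase 0,
      |‖βp + (-1 : ℂ) ^ ((l:ℤ) + k) * βm‖ ^ 2 * mult d ((l:ℤ) + k) /
          (lam2 d ((l:ℤ) + k) - lam2 d (l:ℤ)) ^ 2 - F k * c|
        ≤ 12*A*(Υ:ℝ)*Z*(h n)*(((k:ℝ))^2)⁻¹ + 8*A*Z*(h n)^2 := by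
    intro k hk
    rw [Finset.mem_erase, hWdef, Finset.mem_Icc] at hk
    obtain ⟨hk0, hk1, hk2⟩ := hk
    have hκabs : |(k:ℝ)| ≤ 2*(Υ:ℝ)-1 := by
      have hz : |k| ≤ 2*(Υ:ℤ)-1 := abs_le.mpr ⟨hk1, hk2⟩
      calc |(k:ℝ)| = ((|k| : ℤ) : ℝ) := Int.cast_abs.symm
        _ ≤ ((2*(Υ:ℤ)-1 : ℤ) : ℝ) := by exact_mod_cast hz
        _ = 2*(Υ:ℝ)-1 := by push_cast; ring
    have hκ1 : (1:ℝ) ≤ |(k:ℝ)| := by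
      have hz : (1:ℤ) ≤ |k| := Int.one_le_abs hk0
      calc (1:ℝ) = ((1:ℤ) : ℝ) := by norm_num
        _ ≤ ((|k| : ℤ) : ℝ) := by exact_mod_cast hz
        _ = |(k:ℝ)| := Int.cast_abs
    have hκne : ((k:ℝ)) ≠ 0 := Int.cast_ne_zero.mpr hk0
    have hukpos : 0 < u + (k:ℝ) := by
      nlinarith [neg_abs_le ((k:ℝ)), hκabs, hu400, hΥR]
    have hukne : u + (k:ℝ) ≠ 0 := ne_of_gt hukpos
    have hden : lam2 d ((l:ℤ)+k) - lam2 d (l:ℤ) = (k:ℝ)*(u+(k:ℝ)) := by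
      rw [lam2, lam2, hudef]
      push_cast
      ring
    rw [coeff1 l ρ βp βm (hρ n) hρ2 hβm k, hden]
    rcases em (Odd k) with hodd | heven
    · rw [if_pos hodd]
      have hFk : F k = 4*A/(k:ℝ)^2 := by
        show (if Odd k then 4*A else 0) / (k:ℝ)^2 = _
        rw [if_pos hodd]
      rw [hFk]
      have hdiff : 4*A * mult d ((l:ℤ)+k) / ((k:ℝ)*(u+(k:ℝ)))^2 - (4*A/(k:ℝ)^2)*c
          = (4*A/(k:ℝ)^2) * (mult d ((l:ℤ)+k)/(u+(k:ℝ))^2 - c) := by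
        field_simp
      rw [hdiff, abs_mul, abs_of_nonneg (by positivity : (0:ℝ) ≤ 4*A/(k:ℝ)^2)]
      rcases hd with hd2 | hd3
      · subst hd2
        have hmul : mult 2 ((l:ℤ)+k) = u + 2*(k:ℝ) := by
          rw [mult, if_pos rfl, hudef]
          push_cast
          ring
        have hZe : Z = h n := by
          rw [hZdef]
          norm_num
        have hcc : c = h n / 2 := by
          rw [hcdef, hZe]
          norm_num
        have hid : (h n)^2*(u^2-1) = 4 := by
          rw [hudef]
          push_cast at hkey ⊢
          linear_combination (4:ℝ)*hkey
        rw [hmul, hcc]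
        have hcore := core_d2 (h n) u (k:ℝ) (Υ:ℝ) h0 h1 hΥR hu2 hid hκabs hκ1 hu400
        calc 4*A/(k:ℝ)^2 * |(u+2*(k:ℝ))/(u+(k:ℝ))^2 - h n/2|
            ≤ 4*A/(k:ℝ)^2 * (2*(k:ℝ)^2*(h n)^3) :=
              mul_le_mul_of_nonneg_left hcore (by positivity)
          _ = 8*A*(h n)^3 := by
              field_simp
              ring
          _ ≤ 12*A*(Υ:ℝ)*Z*(h n)*(((k:ℝ))^2)⁻¹ + 8*A*Z*(h n)^2 := by
              rw [hZe]
              have hpos : (0:ℝ) ≤ 12*A*(Υ:ℝ)*(h n)*(h n)*(((k:ℝ))^2)⁻¹ := by positivity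
              have he0 : 8*A*(h n)^3 = 8*A*(h n)*(h n)^2 := by ring
              rw [he0]
              exact le_add_of_nonneg_left hpos
      · subst hd3
        have hmul : mult 3 ((l:ℤ)+k) = (u/2 + (k:ℝ))^2 := by
          rw [mult, if_neg (by norm_num), hudef]
          push_cast
          ring
        have hZe : Z = 1 := by
          rw [hZdef]
          norm_num
        have hcc : c = 1/4 := by
          rw [hcdef, hZe]
          norm_num
        rw [hmul, hcc]
        have hcore := core_d3 (h n) u (k:ℝ) (Υ:ℝ) h0 h1 hΥR hu2 hκabs hu400
        calc 4*A/(k:ℝ)^2 * |(u/2+(k:ℝ))^2/(u+(k:ℝ))^2 - 1/4|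
            ≤ 4*A/(k:ℝ)^2 * (3*(Υ:ℝ)*h n) :=
              mul_le_mul_of_nonneg_left hcore (by positivity)
          _ ≤ 12*A*(Υ:ℝ)*Z*(h n)*(((k:ℝ))^2)⁻¹ + 8*A*Z*(h n)^2 := by
              rw [hZe]
              have he1 : 4*A/(k:ℝ)^2 * (3*(Υ:ℝ)*h n)
                  = 12*A*(Υ:ℝ)*1*(h n)*(((k:ℝ))^2)⁻¹ := by
                rw [div_eq_mul_inv]
                ring
              rw [he1]
              have hpos : (0:ℝ) ≤ 8*A*1*(h n)^2 := by positivity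
              linarith
    · rw [if_neg heven]
      have hFk : F k = 0 := by
        show (if Odd k then 4*A else 0) / (k:ℝ)^2 = 0
        rw [if_neg heven, zero_div]
      rw [hFk]
      have hz : (0:ℝ) * mult d ((l:ℤ)+k) / ((k:ℝ)*(u+(k:ℝ)))^2 - 0 * c = 0 := by
        rw [zero_mul, zero_div, zero_mul, sub_zero]
      rw [hz, abs_zero]
      positivity
  -- window sums
  have hsumW : ∑ k ∈ W.erase 0, (((k:ℝ))^2)⁻¹ ≤ 4 := by
    have hb := sum_inv_sq_int_bound 1 le_rfl (W.erase 0) (by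
      intro k hk
      rw [Finset.mem_erase] at hk
      exact_mod_cast Int.one_le_abs hk.1)
    simpa using hb
  have hcard : ((W.erase 0).card : ℝ) ≤ 4*(Υ:ℝ) := by
    have hc1 : (W.erase 0).card ≤ W.card := Finset.card_le_card (Finset.erase_subset _ _)
    have hc2 : W.card = (2*(Υ:ℤ)-1 + 1 - (-(2*(Υ:ℤ)-1))).toNat := by
      rw [hWdef, Int.card_Icc]
    have hc3 : W.card ≤ 4*Υ := by
      rw [hc2]
      omega
    calc ((W.erase 0).card : ℝ) ≤ (W.card : ℝ) := by exact_mod_cast hc1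
      _ ≤ ((4*Υ : ℕ) : ℝ) := by exact_mod_cast hc3
      _ = 4*(Υ:ℝ) := by push_cast; ring
  -- rewrite the goal difference
  have hgoal_eq : (∑ k ∈ W.erase 0,
        ‖βp + (-1 : ℂ) ^ ((l:ℤ) + k) * βm‖ ^ 2 * mult d ((l:ℤ) + k) /
          (lam2 d ((l:ℤ) + k) - lam2 d (l:ℤ)) ^ 2)
      - T * Z / (2*((d:ℝ)-1))
      = (∑ k ∈ W.erase 0,
          (‖βp + (-1 : ℂ) ^ ((l:ℤ) + k) * βm‖ ^ 2 * mult d ((l:ℤ) + k) /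
            (lam2 d ((l:ℤ) + k) - lam2 d (l:ℤ)) ^ 2 - F k * c))
        - tail * c := by
    rw [Finset.sum_sub_distrib, ← Finset.sum_mul]
    rw [Finset.sum_erase W hF0, hTval, hcdef]
    ring
  rw [hgoal_eq]
  -- final assembly
  calc |(∑ k ∈ W.erase 0,
          (‖βp + (-1 : ℂ) ^ ((l:ℤ) + k) * βm‖ ^ 2 * mult d ((l:ℤ) + k) /
            (lam2 d ((l:ℤ) + k) - lam2 d (l:ℤ)) ^ 2 - F k * c))
        - tail * c|
      ≤ |∑ k ∈ W.erase 0,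
          (‖βp + (-1 : ℂ) ^ ((l:ℤ) + k) * βm‖ ^ 2 * mult d ((l:ℤ) + k) /
            (lam2 d ((l:ℤ) + k) - lam2 d (l:ℤ)) ^ 2 - F k * c)| + |tail * c| :=
        abs_sub _ _
    _ ≤ (∑ k ∈ W.erase 0,
          |‖βp + (-1 : ℂ) ^ ((l:ℤ) + k) * βm‖ ^ 2 * mult d ((l:ℤ) + k) /
            (lam2 d ((l:ℤ) + k) - lam2 d (l:ℤ)) ^ 2 - F k * c|) + tail * c := by
        refine add_le_add (Finset.abs_sum_le_sum_abs _ _) ?_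
        rw [abs_of_nonneg (mul_nonneg htail0 hc0)]
    _ ≤ (∑ k ∈ W.erase 0, (12*A*(Υ:ℝ)*Z*(h n)*(((k:ℝ))^2)⁻¹ + 8*A*Z*(h n)^2))
          + (8*A/(Υ:ℝ))*(Z/2) := by
        refine add_le_add (Finset.sum_le_sum hper) ?_
        exact mul_le_mul htailB hcle hc0 (by positivity)
    _ = 12*A*(Υ:ℝ)*Z*(h n)*(∑ k ∈ W.erase 0, (((k:ℝ))^2)⁻¹)
          + ((W.erase 0).card : ℝ)*(8*A*Z*(h n)^2) + (8*A/(Υ:ℝ))*(Z/2) := by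
        rw [Finset.sum_add_distrib, ← Finset.mul_sum, Finset.sum_const, nsmul_eq_mul]
    _ ≤ 12*A*(Υ:ℝ)*Z*(h n)*4 + (4*(Υ:ℝ))*(8*A*Z*(h n)^2) + (8*A/(Υ:ℝ))*(Z/2) := by
        refine add_le_add (add_le_add ?_ ?_) le_rfl
        · exact mul_le_mul_of_nonneg_left hsumW (by positivity)
        · exact mul_le_mul_of_nonneg_right hcard (by positivity)
    _ ≤ (100*A+2)*Z*((Υ:ℝ)*h n + ((Υ:ℝ))⁻¹) := by
        have hΥpos : (0:ℝ) < (Υ:ℝ) := by linarith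
        have hP : (0:ℝ) ≤ Z*((Υ:ℝ)*h n) := by positivity
        have hQ : (0:ℝ) ≤ Z*((Υ:ℝ))⁻¹ := by positivity
        have hAP : (0:ℝ) ≤ A*(Z*((Υ:ℝ)*h n)) := mul_nonneg hA hP
        have hAQ : (0:ℝ) ≤ A*(Z*((Υ:ℝ))⁻¹) := mul_nonneg hA hQ
        have h32 : 32*(A*(Z*((Υ:ℝ)*h n)))*(h n) ≤ 32*(A*(Z*((Υ:ℝ)*h n))) :=
          mul_le_of_le_one_right (by positivity) h1.le
        have he3 : (8*A/(Υ:ℝ))*(Z/2) = 4*(A*(Z*((Υ:ℝ))⁻¹)) := by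
          rw [div_eq_mul_inv]
          ring
        rw [he3]
        linarith [hP, hQ, hAP, hAQ, h32]
end
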